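/- arXiv:2003.10977 — 8 statements merged into one kernel-verified Lean document; each statement's English description precedes it below -/
import Mathlib

section
/- Let M be an n × kn matrix with rational entries. Then the columns of M can be partitioned into k disjoint blocks of size n each forming a nonsingular n × n submatrix if and only if for every 0 ≤ d ≤ n, the maximum number of columns of M whose ℚ-linear span has dimension at most d is at most dk. -/
/-!
Edmonds' augmenting argument for matroid partition, in the column matroid. Take `k` pairwise
disjoint independent sets of columns of maximum total size and suppose a column `e` is left
uncovered. Moving the uncovered column into a block, in place of a column occurring in its
representation by that block, keeps the span and the size of that block, so the family stays
independent and maximum, and the displaced column is the new uncovered one. Maximality forces every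
uncovered column to lie in the span of every block; tracking the exchanges shows that every column
reachable from `e` in this way is even spanned by the reachable columns of each original block. So
the reachable set `R` has rank at most `#(J₀ b ∩ R)` for each block `b`, and since `e` lies in no
block, `k * rank R < #R`, which the rank condition forbids.

Conversely, a partition into bases meets any set `T` in at most `rank T` columns per block. A
covering family of `k` independent sets of an `n`-dimensional space with `k * n` elements consists
of bases, which gives the blocks of the partition.
-/

open Finset Submodule Module Function

variable {K V ι β : Type*} [Field K] [AddCommGroup V] [Module K V] {v : ι → V}

theorem linearIndepOn_finset_iff_card_eq_finrank_span {s : Finset ι} :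
    LinearIndepOn K v (s : Set ι) ↔ #s = finrank K (span K (v '' s)) := by
  rw [LinearIndepOn, linearIndependent_iff_card_eq_finrank_span, Set.finrank, ← Set.image_eq_range]
  simp

theorem finrank_span_image_le_card (s : Finset ι) : finrank K (span K (v '' s)) ≤ #s := by
  rw [Set.image_eq_range]
  exact (finrank_range_le_card _).trans_eq (Fintype.card_coe s)

theorem finrank_span_image_mono {s t : Finset ι} (h : span K (v '' s) ≤ span K (v '' t)) :
    finrank K (span K (v '' s)) ≤ finrank K (span K (v '' t)) :=
  haveI := Module.Finite.span_of_finite K (t.finite_toSet.image v)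
  Submodule.finrank_mono h

theorem span_image_insert_erase_eq [DecidableEq ι] {s : Finset ι} {x y : ι} {c : ι →₀ K}
    (hc : c ∈ Finsupp.supported K K (s : Set ι)) (hcx : Finsupp.linearCombination K v c = v x)
    (hy : y ∈ c.support) : span K (v '' ↑(insert x (s.erase y))) = span K (v '' s) := by
  set P := span K (v '' ↑(insert x (s.erase y)))
  have hvx : v x ∈ span K (v '' s) :=
    (Finsupp.mem_span_image_iff_linearCombination K).2 ⟨c, hc, hcx⟩
  have hvxP : v x ∈ P := subset_span ⟨x, by simp, rfl⟩
  have hvyP : v y ∈ P := by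
    have hrest : Finsupp.linearCombination K v (c.erase y) ∈ P := by
      refine span_mono (Set.image_mono (s := ↑(s.erase y)) (coe_subset.2 (subset_insert _ _)))
        ((Finsupp.mem_span_image_iff_linearCombination K).2 ⟨c.erase y, ?_, rfl⟩)
      rw [Finsupp.mem_supported, Finsupp.support_erase, coe_erase, coe_erase]
      exact Set.sdiff_subset_sdiff_left ((Finsupp.mem_supported K c).1 hc)
    have hsplit : c y • v y + Finsupp.linearCombination K v (c.erase y) = v x := by
      rw [← hcx, ← Finsupp.linearCombination_single, ← map_add, Finsupp.single_add_erase]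
    refine (smul_mem_iff P (Finsupp.mem_support_iff.1 hy)).1 ?_
    rw [eq_sub_of_add_eq hsplit]
    exact sub_mem hvxP hrest
  refine le_antisymm ?_ (span_le.2 ?_)
  · rw [span_le, coe_insert, Set.image_insert_eq, Set.insert_subset_iff]
    exact ⟨hvx, subset_span.trans' (Set.image_mono (coe_subset.2 (erase_subset y s)))⟩
  rintro _ ⟨w, hw, rfl⟩
  obtain rfl | hwy := eq_or_ne w y
  · exact hvyP
  · exact subset_span ⟨w, by simp [hwy, hw], rfl⟩

theorem card_le_card_mul_finrank_span [Fintype β] {J : β → Finset ι}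
    (hJ : ∀ b, LinearIndepOn K v (J b : Set ι)) {T : Finset ι} (hT : ∀ x ∈ T, ∃ b, x ∈ J b) :
    #T ≤ Fintype.card β * finrank K (span K (v '' T)) := by
  classical
  calc #T ≤ #(univ.biUnion fun b => T ∩ J b) := card_le_card fun x hx => by
          obtain ⟨b, hb⟩ := hT x hx
          exact mem_biUnion.2 ⟨b, mem_univ _, mem_inter.2 ⟨hx, hb⟩⟩
    _ ≤ ∑ b, #(T ∩ J b) := card_biUnion_le
    _ ≤ ∑ _b : β, finrank K (span K (v '' T)) := sum_le_sum fun b _ => ?_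
    _ = _ := by simp
  rw [linearIndepOn_finset_iff_card_eq_finrank_span.1 ((hJ b).mono (by simp))]
  exact finrank_span_image_mono (span_mono (Set.image_mono (by simp)))

section Packing

variable (K v) in
def IsIndepPacking (J : β → Finset ι) : Prop :=
  (∀ b, LinearIndepOn K v (J b : Set ι)) ∧ Pairwise (Disjoint on J)

theorem IsIndepPacking.update [DecidableEq β] {J : β → Finset ι} (hJ : IsIndepPacking K v J)
    {b : β} {s : Finset ι} (hs : LinearIndepOn K v (s : Set ι))
    (hdisj : ∀ b' ≠ b, Disjoint s (J b')) : IsIndepPacking K v (update J b s) := by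
  refine ⟨fun b' => ?_, fun i j hij => ?_⟩
  · obtain rfl | hb' := eq_or_ne b' b
    · simpa using hs
    · simpa [hb'] using hJ.1 b'
  · simp only [onFun, update_apply]
    split_ifs with hi hj hj
    · exact absurd (hi.trans hj.symm) hij
    · exact hdisj j hj
    · exact (hdisj i hi).symm
    · exact hJ.2 hij

variable [Fintype β]

variable (K v) in
def IsMaxIndepPacking (J : β → Finset ι) : Prop :=
  IsIndepPacking K v J ∧
    ∀ J' : β → Finset ι, IsIndepPacking K v J' → ∑ b, #(J' b) ≤ ∑ b, #(J b)

theorem exists_isMaxIndepPacking [Fintype ι] : ∃ J : β → Finset ι, IsMaxIndepPacking K v J := by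
  classical
  have hempty : IsIndepPacking K v (fun _ : β => (∅ : Finset ι)) :=
    ⟨fun _ => by simp, fun _ _ _ => disjoint_empty_left _⟩
  obtain ⟨J, hJ, hmax⟩ := (univ.filter (IsIndepPacking K v)).exists_max_image
    (fun J : β → Finset ι => ∑ b, #(J b)) ⟨_, mem_filter.2 ⟨mem_univ _, hempty⟩⟩
  exact ⟨J, (mem_filter.1 hJ).2, fun J' hJ' => hmax J' (mem_filter.2 ⟨mem_univ _, hJ'⟩)⟩

variable [DecidableEq β]

theorem sum_card_update_add (J : β → Finset ι) (b : β) (s : Finset ι) :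
    ∑ b', #(update J b s b') + #(J b) = ∑ b', #(J b') + #s := by
  simp only [apply_update (fun _ => Finset.card), sum_update_of_mem (mem_univ b),
    sum_eq_add_sum_sdiff_singleton_of_mem (mem_univ b) fun b' => #(J b')]
  ring

variable [DecidableEq ι]

theorem IsMaxIndepPacking.mem_span {J : β → Finset ι} (hJ : IsMaxIndepPacking K v J) {z : ι}
    (hz : ∀ b, z ∉ J b) (b : β) : v z ∈ span K (v '' J b) := by
  by_contra hzb
  have hpack : IsIndepPacking K v (update J b (insert z (J b))) :=
    hJ.1.update (by rw [coe_insert, linearIndepOn_insert (hz b)]; exact ⟨hJ.1.1 b, hzb⟩)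
      fun b' hb' => disjoint_insert_left.2 ⟨hz b', hJ.1.2 hb'.symm⟩
  have hle := hJ.2 _ hpack
  have hsum := sum_card_update_add J b (insert z (J b))
  rw [card_insert_of_notMem (hz b)] at hsum
  omega

theorem IsMaxIndepPacking.exchange {J : β → Finset ι} (hJ : IsMaxIndepPacking K v J) {z y : ι}
    (hz : ∀ b, z ∉ J b) {b : β} {c : ι →₀ K} (hc : c ∈ Finsupp.supported K K ↑(J b))
    (hcz : Finsupp.linearCombination K v c = v z) (hy : y ∈ c.support) :
    IsMaxIndepPacking K v (update J b (insert z ((J b).erase y))) ∧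
      ∀ b', y ∉ update J b (insert z ((J b).erase y)) b' := by
  have hyb : y ∈ J b := (Finsupp.mem_supported K c).1 hc hy
  have hcard : #(insert z ((J b).erase y)) = #(J b) := by
    rw [card_insert_of_notMem fun h => hz b (mem_of_mem_erase h), card_erase_add_one hyb]
  have hpack : IsIndepPacking K v (update J b (insert z ((J b).erase y))) := by
    refine hJ.1.update ?_ fun b' hb' => ?_
    · rw [linearIndepOn_finset_iff_card_eq_finrank_span, span_image_insert_erase_eq hc hcz hy,
        hcard, ← linearIndepOn_finset_iff_card_eq_finrank_span]
      exact hJ.1.1 b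
    · exact disjoint_insert_left.2 ⟨hz b', (hJ.1.2 hb'.symm).mono_left (erase_subset y _)⟩
  refine ⟨⟨hpack, fun J' hJ' => ?_⟩, fun b' => ?_⟩
  · have := sum_card_update_add J b (insert z ((J b).erase y))
    have := hJ.2 J' hJ'
    omega
  · obtain rfl | hb' := eq_or_ne b' b
    · simp only [update_self, mem_insert, notMem_erase, or_false]
      rintro rfl
      exact hz b' hyb
    · simpa [hb'] using disjoint_left.1 (hJ.1.2 hb'.symm) hyb

end Packing

section Exchange

variable [Fintype β] [DecidableEq β] [DecidableEq ι]

variable (K v) in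
/-- Configurations reachable from the packing `J₀` with uncovered element `e` by repeatedly
moving the uncovered element `z` into a block `J b`, in place of an element `y` that occurs in
some representation of `v z` by `J b`; `y` becomes the new uncovered element. -/
inductive ExchangeReachable (J₀ : β → Finset ι) (e : ι) : ι → (β → Finset ι) → Prop
  | refl : ExchangeReachable J₀ e e J₀
  | exchange {z : ι} {J : β → Finset ι} (h : ExchangeReachable J₀ e z J) (b : β) {c : ι →₀ K}
      (hc : c ∈ Finsupp.supported K K ↑(J b)) (hcz : Finsupp.linearCombination K v c = v z)
      {y : ι} (hy : y ∈ c.support) :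
      ExchangeReachable J₀ e y (update J b (insert z ((J b).erase y)))

namespace ExchangeReachable

variable {J₀ J : β → Finset ι} {e z : ι} (hJ₀ : IsMaxIndepPacking K v J₀) (he : ∀ b, e ∉ J₀ b)
  {R : Set ι} (hR : ∀ z J, ExchangeReachable K v J₀ e z J → z ∈ R)
include hJ₀ he

theorem isMaxIndepPacking (h : ExchangeReachable K v J₀ e z J) :
    IsMaxIndepPacking K v J ∧ ∀ b, z ∉ J b := by
  induction h with
  | refl => exact ⟨hJ₀, he⟩
  | exchange _ _ hc hcz hy ih => exact ih.1.exchange ih.2 hc hcz hy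

include hR

theorem mem_span_inter (h : ExchangeReachable K v J₀ e z J) (b : β) :
    v z ∈ span K (v '' (↑(J b) ∩ R)) := by
  obtain ⟨hJ, hz⟩ := h.isMaxIndepPacking hJ₀ he
  obtain ⟨c, hc, hcz⟩ := (Finsupp.mem_span_image_iff_linearCombination K).1 (hJ.mem_span hz b)
  refine (Finsupp.mem_span_image_iff_linearCombination K).2 ⟨c, ?_, hcz⟩
  exact (Finsupp.mem_supported K c).2 fun y hy =>
    ⟨(Finsupp.mem_supported K c).1 hc hy, hR _ _ (h.exchange b hc hcz hy)⟩

theorem span_inter_le (h : ExchangeReachable K v J₀ e z J) (b : β) :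
    span K (v '' (↑(J b) ∩ R)) ≤ span K (v '' (↑(J₀ b) ∩ R)) := by
  induction h with
  | refl => exact le_rfl
  | @exchange z J h b' c hc hcz y hy ih =>
    obtain rfl | hb := eq_or_ne b b'
    · have hsub : ↑(insert z ((J b).erase y)) ∩ R ⊆ insert z (↑(J b) ∩ R) := by
        rintro w ⟨hw, hwR⟩
        rw [coe_insert, coe_erase] at hw
        rcases hw with rfl | ⟨hw, -⟩
        · exact Set.mem_insert _ _
        · exact Set.mem_insert_of_mem _ ⟨hw, hwR⟩
      rw [update_self]
      refine (span_mono (Set.image_mono hsub)).trans ?_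
      rw [Set.image_insert_eq, span_insert, sup_le_iff, span_singleton_le_iff_mem]
      exact ⟨ih (h.mem_span_inter hJ₀ he hR b), ih⟩
    · rw [update_of_ne hb]
      exact ih

end ExchangeReachable

theorem exists_indepPacking_cover [Fintype ι]
    (H : ∀ T : Finset ι, #T ≤ Fintype.card β * finrank K (span K (v '' T))) :
    ∃ J : β → Finset ι, IsIndepPacking K v J ∧ ∀ x, ∃ b, x ∈ J b := by
  obtain ⟨J₀, hJ₀⟩ := exists_isMaxIndepPacking (K := K) (v := v) (β := β)
  refine ⟨J₀, hJ₀.1, ?_⟩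
  by_contra! ⟨e, he⟩
  classical
  set R : Finset ι := {z | ∃ J, ExchangeReachable K v J₀ e z J}
  have hR : ∀ z J, ExchangeReachable K v J₀ e z J → z ∈ (R : Set ι) := fun z J h => by
    simpa [R] using ⟨J, h⟩
  have hrk (b : β) : finrank K (span K (v '' R)) ≤ #(J₀ b ∩ R) := by
    refine (finrank_span_image_mono (span_le.2 ?_)).trans (finrank_span_image_le_card _)
    rintro _ ⟨z, hz, rfl⟩
    obtain ⟨J, hJ⟩ : ∃ J, ExchangeReachable K v J₀ e z J := by simpa [R] using hz
    rw [coe_inter]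
    exact hJ.span_inter_le hJ₀ he hR b (hJ.mem_span_inter hJ₀ he hR b)
  have hcount : ∑ b, #(J₀ b ∩ R) < #R := by
    rw [← card_biUnion fun b _ b' _ hb => (hJ₀.1.2 hb).mono inter_subset_left inter_subset_left]
    refine card_lt_card ((ssubset_iff_of_subset ?_).2 ⟨e, ?_, ?_⟩)
    · exact biUnion_subset.2 fun b _ => inter_subset_right
    · exact hR e J₀ ExchangeReachable.refl
    · simp [he]
  have := H R
  have : Fintype.card β * finrank K (span K (v '' R)) ≤ ∑ b, #(J₀ b ∩ R) := by
    rw [← card_univ, ← smul_eq_mul, ← sum_const]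
    exact sum_le_sum fun b _ => hrk b
  omega

end Exchange

theorem IsIndepPacking.card_eq_finrank [Fintype ι] [Fintype β] [FiniteDimensional K V]
    {J : β → Finset ι} (hJ : IsIndepPacking K v J) (hcov : ∀ x, ∃ b, x ∈ J b)
    (hcard : Fintype.card ι = Fintype.card β * finrank K V) (b : β) : #(J b) = finrank K V := by
  classical
  have hle (b : β) : #(J b) ≤ finrank K V := by
    rw [linearIndepOn_finset_iff_card_eq_finrank_span.1 (hJ.1 b)]
    exact Submodule.finrank_le _
  have hsum : ∑ b, #(J b) = ∑ _b : β, finrank K V := by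
    rw [← card_biUnion fun b _ b' _ hb => hJ.2 hb, sum_const, card_univ, smul_eq_mul, ← hcard,
      ← card_univ]
    exact congrArg card (eq_univ_of_forall fun x => mem_biUnion.2 <| (hcov x).imp fun b hb =>
      ⟨mem_univ b, hb⟩)
  exact (sum_eq_sum_iff_of_le fun b _ => hle b).1 hsum b (mem_univ b)

theorem exists_bijective_of_partition {n : ℕ} {J : β → Finset ι}
    (hdisj : Pairwise (Disjoint on J)) (hcov : ∀ x, ∃ b, x ∈ J b) (hcard : ∀ b, #(J b) = n) :
    ∃ e : β → Fin n → ι,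
      Bijective (fun p : β × Fin n => e p.1 p.2) ∧ ∀ b, Set.range (e b) = J b := by
  let f (b : β) : Fin n ≃ J b := ((J b).equivFinOfCardEq (hcard b)).symm
  refine ⟨fun b j => f b j, ⟨?_, fun x => ?_⟩, fun b => ?_⟩
  · rintro ⟨b, j⟩ ⟨b', j'⟩ h
    simp only at h
    obtain rfl : b = b' := by
      by_contra hb
      exact disjoint_left.1 (hdisj hb) (f b j).2 (h ▸ (f b' j').2)
    rw [(f b).injective (Subtype.ext h)]
  · obtain ⟨b, hb⟩ := hcov x
    exact ⟨(b, (f b).symm ⟨x, hb⟩), by simp⟩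
  · ext x
    refine ⟨?_, fun hx => ⟨(f b).symm ⟨x, hx⟩, by simp⟩⟩
    rintro ⟨j, rfl⟩
    exact (f b j).2

theorem Matrix.det_ne_zero_iff_linearIndependent_col {m : Type*} [Fintype m] [DecidableEq m]
    {A : Matrix m m K} : A.det ≠ 0 ↔ LinearIndependent K A.col := by
  rw [Matrix.linearIndependent_cols_iff_isUnit, Matrix.isUnit_iff_isUnit_det, isUnit_iff_ne_zero]

theorem injective_of_injective_uncurry {γ : Type*} {e : β → γ → ι}
    (he : Injective (fun p : β × γ => e p.1 p.2)) (b : β) : Injective (e b) :=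
  fun j j' h => congrArg Prod.snd (he (a₁ := (b, j)) (a₂ := (b, j')) h)

theorem stmt2_general (n k : ℕ)
    (M : Matrix (Fin n) (Fin (k * n)) ℚ) :
    (∃ e : Fin k → Fin n → Fin (k * n),
        Function.Bijective (fun p : Fin k × Fin n => e p.1 p.2) ∧
        ∀ b : Fin k, (Matrix.of fun i j => M i (e b j)).det ≠ 0)
    ↔ (∀ d : ℕ, d ≤ n → ∀ T : Finset (Fin (k * n)),
        Module.finrank ℚ ↥(Submodule.span ℚ ((fun j i => M i j) '' ↑T)) ≤ d →
        T.card ≤ d * k) := by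
  have hdet {f : Fin n → Fin (k * n)} (hf : Injective f) :
      (Matrix.of fun i j => M i (f j)).det ≠ 0 ↔
        LinearIndepOn ℚ (fun j i => M i j) (Set.range f) := by
    rw [Matrix.det_ne_zero_iff_linearIndependent_col, linearIndepOn_range_iff hf]
    rfl
  constructor
  · rintro ⟨e, he, hdet_e⟩ d _ T hT
    have hindep (b : Fin k) : LinearIndepOn ℚ (fun j i => M i j) ↑(univ.image (e b)) := by
      simpa using (hdet (injective_of_injective_uncurry he.injective b)).1 (hdet_e b)
    have hcov (x : Fin (k * n)) : ∃ b, x ∈ univ.image (e b) := by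
      obtain ⟨⟨b, j⟩, rfl⟩ := he.surjective x
      exact ⟨b, by simp⟩
    have hcard := card_le_card_mul_finrank_span hindep (T := T) fun x _ => hcov x
    rw [Fintype.card_fin (n := k)] at hcard
    exact hcard.trans (by rw [mul_comm]; exact Nat.mul_le_mul_right k hT)
  · intro h
    obtain ⟨J, hJ, hcov⟩ :=
      exists_indepPacking_cover (K := ℚ) (β := Fin k) (v := fun j i => M i j) fun T =>
        (h _ ((Submodule.finrank_le _).trans_eq (by simp)) T le_rfl).trans_eq
          (by rw [Fintype.card_fin, mul_comm])
    obtain ⟨e, he, hrange⟩ := exists_bijective_of_partition hJ.2 hcov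
      fun b => (hJ.card_eq_finrank hcov (by simp) b).trans (finrank_fin_fun ℚ)
    exact ⟨e, he, fun b =>
      (hdet (injective_of_injective_uncurry he.injective b)).2 (hrange b ▸ hJ.1 b)⟩

/-- **Aigner's criterion.** An `n × kn` rational matrix is `k`-partitionable
(its columns can be split into `k` blocks of size `n`, each forming a nonsingular
`n × n` submatrix) if and only if, for every `0 ≤ d ≤ n`, any set of columns whose
`ℚ`-linear span has dimension at most `d` has size at most `dk`. -/
theorem stmt2 (n k : ℕ) (hn : 0 < n) (hk : 0 < k)
    (M : Matrix (Fin n) (Fin (k * n)) ℚ) :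
    (∃ e : Fin k → Fin n → Fin (k * n),
        Function.Bijective (fun p : Fin k × Fin n => e p.1 p.2) ∧
        ∀ b : Fin k, (Matrix.of fun i j => M i (e b j)).det ≠ 0)
    ↔ (∀ d : ℕ, d ≤ n → ∀ T : Finset (Fin (k * n)),
        Module.finrank ℚ ↥(Submodule.span ℚ ((fun j i => M i j) '' ↑T)) ≤ d →
        T.card ≤ d * k) :=
  stmt2_general n k M
end

section
/- Let q, n, s be positive integers and M ∈ ℚ^{n×s} be quasi-q-partitionable, i.e., s ≥ nq and μ(d; M) ≤ dq for all 0 ≤ d < n. Then M has full rank n, and every n × nq submatrix of M (obtained by selecting nq columns) is q-partitionable. -/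
/-!
For an injective choice of `nq` columns, the bound `μ(d; M) ≤ dq` for `d < n` gives
`|T| ≤ q · rank T` for every set `T` of chosen columns (for `rank T = n` because `|T| ≤ nq`).
By the matroid partition theorem the chosen columns then split into `q` independent classes,
which by counting are bases of `ℚⁿ`.

The partition is built one column at a time. A new vector `x` either joins a class it is
independent of, or it starts a shortest path `x → z₁ → ⋯` of exchanges (`zᵢ₊₁` can be
replaced by `zᵢ` in its class without changing the span) ending at a vector that can join
some class; exchanging `z₁` for `x` leaves a shorter such path from `z₁`. If there is no path,
the set `A` reachable from `x` is spanned by its intersection with each class (fundamental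
circuits stay in `A`), so `q · rank A ≤ |A| - 1`.
-/

open Finset Submodule Module

section LinearAlgebra

variable {K V ι : Type*} [DivisionRing K] [AddCommGroup V] [Module K V] {v : ι → V}
  {I : Finset ι}

theorem LinearIndepOn.finrank_span_image_eq_card (hI : LinearIndepOn K v ↑I) :
    finrank K (span K (v '' ↑I)) = #I := by
  rw [Set.image_eq_range, finrank_span_eq_card hI]; simp

/-- `C` is the support of the representation of `y`, i.e. its fundamental circuit in `I`. -/
theorem LinearIndepOn.exists_subset_mem_span_notMem_span_erase [DecidableEq ι] {y : V}
    (hI : LinearIndepOn K v ↑I) (hy : y ∈ span K (v '' ↑I)) :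
    ∃ C ⊆ I, y ∈ span K (v '' ↑C) ∧ ∀ z ∈ C, y ∉ span K (v '' ↑(I.erase z)) := by
  obtain ⟨l, hlI, rfl⟩ := (Finsupp.mem_span_image_iff_linearCombination K).1 hy
  refine ⟨l.support, fun z hz => hlI hz,
    (Finsupp.mem_span_image_iff_linearCombination K).2 ⟨l, l.mem_supported_support K, rfl⟩,
    fun z hz hz' => ?_⟩
  obtain ⟨l', hl'I, hl'⟩ := (Finsupp.mem_span_image_iff_linearCombination K).1 hz'
  have hl'l : l' = l :=
    linearIndepOn_iffₛ.1 hI l' (Finsupp.supported_mono (by simp) hl'I) l hlI hl'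
  have hz'' : z ∉ l'.support := fun h => by simpa using hl'I h
  exact hz'' (hl'l ▸ hz)

theorem span_image_insert_erase_eq_s3 [DecidableEq ι] {x z : ι} (hz : z ∈ I)
    (hx : v x ∈ span K (v '' ↑I)) (hxz : v x ∉ span K (v '' ↑(I.erase z))) :
    span K (v '' ↑(insert x (I.erase z))) = span K (v '' ↑I) := by
  have hI : v '' ↑I = insert (v z) (v '' ↑(I.erase z)) := by
    rw [← Set.image_insert_eq, ← coe_insert, insert_erase hz]
  rw [hI] at hx ⊢
  rw [coe_insert, Set.image_insert_eq]
  apply le_antisymm <;>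
    refine span_le.2 (Set.insert_subset ?_ ((Set.subset_insert _ _).trans subset_span))
  · exact hx
  · exact mem_span_insert_exchange hx hxz

end LinearAlgebra

section Coloring

variable (K) {V ι κ : Type*} [DivisionRing K] [AddCommGroup V] [Module K V] [DecidableEq κ]
  (v : ι → V) (S : Finset ι) (c : ι → κ)

/-- Only the values of `c` on `S` matter: `c` splits `S` into linearly independent colour
classes. -/
def IndepColoring : Prop := ∀ j, LinearIndepOn K v ↑{i ∈ S | c i = j}

variable {K v c} in
theorem IndepColoring.exists_bijective_linearIndependent [Fintype ι] [Fintype κ]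
    [Module.Finite K V] {n : ℕ} (hV : finrank K V = n)
    (hι : Fintype.card ι = n * Fintype.card κ) (hc : IndepColoring K v univ c) :
    ∃ e : κ → Fin n → ι, Function.Bijective (fun p : κ × Fin n => e p.1 p.2) ∧
      ∀ b, LinearIndependent K fun j => v (e b j) := by
  have hc' : ∀ b, LinearIndepOn K v {i | c i = b} := fun b => by simpa using hc b
  have hle : ∀ b, Fintype.card {i // c i = b} ≤ n := fun b =>
    hV ▸ (hc' b).fintype_card_le_finrank
  have hsum : ∑ b, Fintype.card {i // c i = b} = ∑ _b : κ, n := by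
    rw [← Fintype.card_sigma, Fintype.card_congr (Equiv.sigmaFiberEquiv c), hι]
    simp [mul_comm]
  have hfiber : ∀ b, Fintype.card {i // c i = b} = n := fun b =>
    (sum_eq_sum_iff_of_le fun b _ => hle b).1 hsum b (mem_univ b)
  let σ b : Fin n ≃ {i // c i = b} := (Fintype.equivFinOfCardEq (hfiber b)).symm
  refine ⟨fun b j => σ b j, ?_, fun b => (hc' b).comp (σ b) (σ b).injective⟩
  exact ((Equiv.sigmaEquivProd κ (Fin n)).symm.trans
    ((Equiv.sigmaCongrRight σ).trans (Equiv.sigmaFiberEquiv c))).bijective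

variable [DecidableEq ι]

section

variable {S c}

theorem filter_insert_update {x : ι} (hx : x ∉ S) (j j' : κ) :
    {i ∈ insert x S | Function.update c x j i = j'} =
      if j = j' then insert x {i ∈ S | c i = j'} else {i ∈ S | c i = j'} := by
  ext i
  by_cases hix : i = x
  · subst hix; split_ifs <;> simp_all
  · split_ifs <;> simp [hix]

theorem filter_insert_erase_update {x z : ι} (hx : x ∉ S) (j : κ) :
    {i ∈ insert x (S.erase z) | Function.update c x (c z) i = j} =
      if c z = j then insert x ({i ∈ S | c i = j}.erase z) else {i ∈ S | c i = j} := by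
  rw [filter_insert_update (fun h => hx (mem_of_mem_erase h)), filter_erase]
  split_ifs with h
  · rfl
  · exact erase_eq_of_notMem (by simp [h])

end

namespace IndepColoring

/-- `z` can be replaced by `y` in its colour class, keeping the class independent with the same
span. -/
def ExchangeArc (y z : ι) : Prop :=
  z ∈ S ∧ v y ∈ span K (v '' ↑{i ∈ S | c i = c z}) ∧
    v y ∉ span K (v '' ↑({i ∈ S | c i = c z}.erase z))

def IsFree (y : ι) : Prop := ∃ j, v y ∉ span K (v '' ↑{i ∈ S | c i = j})

inductive AugPath : ℕ → ι → Prop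
  | free {y : ι} : IsFree K v S c y → AugPath 0 y
  | arc {k : ℕ} {y z : ι} : ExchangeArc K v S c y z → AugPath k z → AugPath (k + 1) y

variable {K v S c}

theorem insert_of_notMem_span (hc : IndepColoring K v S c) {x : ι} (hx : x ∉ S) {j : κ}
    (hxj : v x ∉ span K (v '' ↑{i ∈ S | c i = j})) :
    IndepColoring K v (insert x S) (Function.update c x j) := by
  intro j'
  rw [filter_insert_update hx]
  split_ifs with h
  · subst h
    rw [coe_insert]
    exact (hc j).insert hxj
  · exact hc j'

section Exchange

variable {x z : ι} (hx : x ∉ S) (hxz : ExchangeArc K v S c x z)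
include hx hxz

theorem span_filter_exchange (j : κ) :
    span K (v '' ↑{i ∈ insert x (S.erase z) | Function.update c x (c z) i = j}) =
      span K (v '' ↑{i ∈ S | c i = j}) := by
  rw [filter_insert_erase_update hx]
  split_ifs with h
  · subst h
    exact span_image_insert_erase_eq_s3 (mem_filter.2 ⟨hxz.1, rfl⟩) hxz.2.1 hxz.2.2
  · rfl

theorem exchange (hc : IndepColoring K v S c) :
    IndepColoring K v (insert x (S.erase z)) (Function.update c x (c z)) := by
  intro j
  rw [filter_insert_erase_update hx]
  split_ifs with h
  · subst h
    rw [coe_insert]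
    exact ((hc _).mono (coe_subset.2 (erase_subset _ _))).insert hxz.2.2
  · exact hc j

theorem IsFree.exchange {y : ι} (hy : IsFree K v S c y) :
    IsFree K v (insert x (S.erase z)) (Function.update c x (c z)) y := by
  obtain ⟨j, hj⟩ := hy
  exact ⟨j, by rwa [span_filter_exchange hx hxz]⟩

theorem ExchangeArc.exchange {y w : ι} (hyw : ExchangeArc K v S c y w)
    (hxw : ¬ ExchangeArc K v S c x w) :
    ExchangeArc K v (insert x (S.erase z)) (Function.update c x (c z)) y w := by
  obtain ⟨hw, hyw, hyw'⟩ := hyw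
  have hwx : w ≠ x := fun h => hx (h ▸ hw)
  have hwz : w ≠ z := by rintro rfl; exact hxw hxz
  refine ⟨mem_insert_of_mem (mem_erase.2 ⟨hwz, hw⟩), ?_⟩
  rw [Function.update_of_ne hwx, span_filter_exchange hx hxz, filter_insert_erase_update hx]
  refine ⟨hyw, ?_⟩
  split_ifs with h
  · have hxw' : v x ∈ span K (v '' ↑({i ∈ S | c i = c w}.erase w)) := by
      by_contra hxw'
      exact hxw ⟨hw, h ▸ hxz.2.1, hxw'⟩
    rwa [erase_insert_of_ne (Ne.symm hwx), erase_right_comm, span_image_insert_erase_eq_s3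
      (mem_erase.2 ⟨Ne.symm hwz, mem_filter.2 ⟨hxz.1, h⟩⟩) hxw']
    refine fun hx' => hxz.2.2 (span_mono (Set.image_mono ?_) hx')
    rw [erase_right_comm, h]
    exact coe_subset.2 (erase_subset _ _)
  · exact hyw'

/-- Since no augmenting path from `x` is shorter than `k + 1`, no arc of a path of length `≤ k`
is a shortcut from `x`, so such a path survives the exchange. -/
theorem AugPath.exchange {k : ℕ} (hmin : ∀ m ≤ k, ¬ AugPath K v S c m x) {m : ℕ} {y : ι}
    (h : AugPath K v S c m y) (hmk : m ≤ k) :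
    AugPath K v (insert x (S.erase z)) (Function.update c x (c z)) m y := by
  induction h with
  | free hy => exact .free (hy.exchange hx hxz)
  | arc hyw hw ih =>
    exact .arc (ExchangeArc.exchange hx hxz hyw fun hxw => hmin _ hmk (.arc hxw hw))
      (ih (by omega))

end Exchange

theorem insert_of_augPath (hc : IndepColoring K v S c) {x : ι} (hx : x ∉ S) {k : ℕ}
    (h : AugPath K v S c k x) : ∃ c' : ι → κ, IndepColoring K v (insert x S) c' := by
  induction k using Nat.strong_induction_on generalizing S c x with
  | _ k ih =>
  by_cases hshort : ∃ m < k, AugPath K v S c m x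
  · obtain ⟨m, hmk, hm⟩ := hshort
    exact ih m hmk hc hx hm
  push Not at hshort
  cases h with
  | free hfree =>
    obtain ⟨j, hj⟩ := hfree
    exact ⟨_, hc.insert_of_notMem_span hx hj⟩
  | @arc m _ z hxz hz =>
    have hzx : z ≠ x := fun h => hx (h ▸ hxz.1)
    have hz' : z ∉ insert x (S.erase z) := by simp [hzx]
    obtain ⟨c', hc'⟩ := ih m (by omega) (hc.exchange hx hxz) hz'
      (hz.exchange hx hxz (fun m' hm' => hshort m' (by omega)) le_rfl)
    rw [insert_comm, insert_erase hxz.1] at hc'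
    exact ⟨c', hc'⟩

theorem exists_augPath_of_reflTransGen {x y : ι}
    (h : Relation.ReflTransGen (ExchangeArc K v S c) x y) (hy : IsFree K v S c y) :
    ∃ k, AugPath K v S c k x := by
  induction h using Relation.ReflTransGen.head_induction_on with
  | refl => exact ⟨0, .free hy⟩
  | head hxy _ ih =>
    obtain ⟨k, hk⟩ := ih
    exact ⟨k + 1, .arc hxy hk⟩

theorem card_mul_finrank_le_of_closed [Fintype κ] (hc : IndepColoring K v S c) {A : Finset ι}
    (hclosed : ∀ y ∈ A, ∀ z, ExchangeArc K v S c y z → z ∈ A)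
    (hfree : ∀ y ∈ A, ¬ IsFree K v S c y) :
    Fintype.card κ * finrank K (span K (v '' ↑A)) ≤ #(A ∩ S) := by
  have hle : ∀ j, finrank K (span K (v '' ↑A)) ≤ #{i ∈ A ∩ S | c i = j} := by
    intro j
    have hind : LinearIndepOn K v ↑{i ∈ A ∩ S | c i = j} :=
      (hc j).mono (coe_subset.2 fun i => by simp +contextual)
    rw [← hind.finrank_span_image_eq_card]
    have := FiniteDimensional.span_of_finite K ((finite_toSet {i ∈ A ∩ S | c i = j}).image v)
    refine Submodule.finrank_mono (span_le.2 ?_)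
    rintro _ ⟨y, hy, rfl⟩
    have hyj : v y ∈ span K (v '' ↑{i ∈ S | c i = j}) := by
      by_contra h
      exact hfree y hy ⟨j, h⟩
    obtain ⟨C, hCS, hyC, hC⟩ := (hc j).exists_subset_mem_span_notMem_span_erase hyj
    refine span_mono (Set.image_mono fun z hz => ?_) hyC
    obtain ⟨hzS, rfl⟩ := mem_filter.1 (hCS hz)
    exact mem_filter.2 ⟨mem_inter.2 ⟨hclosed y hy z ⟨hzS, hyj, hC z hz⟩, hzS⟩, rfl⟩
  calc Fintype.card κ * finrank K (span K (v '' ↑A))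
      = ∑ j : κ, finrank K (span K (v '' ↑A)) := by simp
    _ ≤ ∑ j : κ, #{i ∈ A ∩ S | c i = j} := sum_le_sum fun j _ => hle j
    _ = #(A ∩ S) := (card_eq_sum_card_fiberwise fun _ _ => mem_univ _).symm

theorem exists_augPath [Fintype κ] (hc : IndepColoring K v S c) {x : ι} (hx : x ∉ S)
    (hS : ∀ T ⊆ insert x S, #T ≤ Fintype.card κ * finrank K (span K (v '' ↑T))) :
    ∃ k, AugPath K v S c k x := by
  classical
  by_contra hno
  set A := {y ∈ insert x S | Relation.ReflTransGen (ExchangeArc K v S c) x y}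
  have hxA : x ∈ A := mem_filter.2 ⟨mem_insert_self _ _, Relation.ReflTransGen.refl⟩
  have hrank := hc.card_mul_finrank_le_of_closed (A := A)
    (fun y hy z hyz => mem_filter.2 ⟨mem_insert_of_mem hyz.1, (mem_filter.1 hy).2.tail hyz⟩)
    (fun y hy hy' => hno (exists_augPath_of_reflTransGen (mem_filter.1 hy).2 hy'))
  have hcard : #(A ∩ S) < #A :=
    card_lt_card ⟨inter_subset_left, fun h => hx (mem_inter.1 (h hxA)).2⟩
  have := hS A (filter_subset _ _)
  omega

end IndepColoring

variable {K v}

theorem exists_indepColoring [Fintype κ] [Nonempty κ] {S : Finset ι}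
    (hS : ∀ T ⊆ S, #T ≤ Fintype.card κ * finrank K (span K (v '' ↑T))) :
    ∃ c : ι → κ, IndepColoring K v S c := by
  induction S using Finset.induction_on with
  | empty => exact ⟨fun _ => Classical.arbitrary κ, fun j => by simp⟩
  | insert x S hx ih =>
    obtain ⟨c, hc⟩ := ih fun T hT => hS T (hT.trans (subset_insert _ _))
    obtain ⟨k, hk⟩ := hc.exists_augPath hx hS
    exact hc.insert_of_augPath hx hk

end Coloring

section QuasiPartitionable

variable {K V ι : Type*} [DivisionRing K] [AddCommGroup V] [Module K V] {n q : ℕ} {v : ι → V}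
  (hv : ∀ d < n, ∀ T : Finset ι, finrank K (span K (v '' ↑T)) ≤ d → #T ≤ d * q)
include hv

theorem finrank_span_range_eq_of_forall_card_le [Fintype ι] [Module.Finite K V]
    (hV : finrank K V = n) (hq : 0 < q) (hι : n * q ≤ Fintype.card ι) :
    finrank K (span K (Set.range v)) = n := by
  refine le_antisymm (hV ▸ Submodule.finrank_le _) (not_lt.1 fun hlt => ?_)
  have hcard := hv _ hlt univ (by rw [coe_univ, Set.image_univ])
  rw [card_univ] at hcard
  have := Nat.mul_lt_mul_of_pos_right hlt hq
  omega

theorem card_le_mul_finrank_comp {ι' : Type*} [Fintype ι'] [DecidableEq ι] {c : ι' → ι}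
    (hc : Function.Injective c) (hι' : Fintype.card ι' = n * q) (T : Finset ι') :
    #T ≤ q * finrank K (span K ((v ∘ c) '' ↑T)) := by
  by_cases hT : finrank K (span K ((v ∘ c) '' ↑T)) < n
  · have hTc := hv _ hT (T.image c) (by rw [coe_image, ← Set.image_comp])
    rw [card_image_of_injective _ hc] at hTc
    rwa [mul_comm]
  · calc #T ≤ n * q := hι' ▸ card_le_univ T
      _ ≤ q * finrank K (span K ((v ∘ c) '' ↑T)) := by
        rw [mul_comm]
        exact Nat.mul_le_mul_left q (not_lt.1 hT)

end QuasiPartitionable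

theorem stmt3_general (q n s : ℕ) (hq : 0 < q)
    (M : Matrix (Fin n) (Fin s) ℚ)
    (h1 : n * q ≤ s)
    (h2 : ∀ d : ℕ, d < n → ∀ T : Finset (Fin s),
        Module.finrank ℚ ↥(Submodule.span ℚ ((fun j i => M i j) '' ↑T)) ≤ d →
        T.card ≤ d * q) :
    M.rank = n ∧
    ∀ c : Fin (n * q) → Fin s, Function.Injective c →
      ∃ e : Fin q → Fin n → Fin (n * q),
        Function.Bijective (fun p : Fin q × Fin n => e p.1 p.2) ∧
        ∀ b : Fin q, (Matrix.of fun i j => M i (c (e b j))).det ≠ 0 := by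
  refine ⟨?_, fun c hc => ?_⟩
  · rw [Matrix.rank_eq_finrank_span_cols]
    exact finrank_span_range_eq_of_forall_card_le h2 (finrank_fin_fun ℚ) hq (by simpa using h1)
  have : NeZero q := ⟨hq.ne'⟩
  obtain ⟨col, hcol⟩ := exists_indepColoring (κ := Fin q) fun T _ => by
    simpa using card_le_mul_finrank_comp h2 hc (Fintype.card_fin _) T
  obtain ⟨e, he, hind⟩ :=
    hcol.exists_bijective_linearIndependent (finrank_fin_fun ℚ) (by simp)
  refine ⟨e, he, fun b => ?_⟩
  exact ((Matrix.isUnit_iff_isUnit_det _).1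
    (Matrix.linearIndependent_cols_iff_isUnit.1 (hind b))).ne_zero

/-- **Quasi-partitionable matrices.** If `M ∈ ℚ^{n×s}` is quasi-`q`-partitionable,
i.e. `s ≥ nq` and `μ(d; M) ≤ dq` for all `0 ≤ d < n`, then `M` has full rank `n`
and every `n × nq` submatrix of `M` is `q`-partitionable. -/
theorem stmt3 (q n s : ℕ) (hq : 0 < q) (hn : 0 < n) (hs : 0 < s)
    (M : Matrix (Fin n) (Fin s) ℚ)
    (h1 : n * q ≤ s)
    (h2 : ∀ d : ℕ, d < n → ∀ T : Finset (Fin s),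
        Module.finrank ℚ ↥(Submodule.span ℚ ((fun j i => M i j) '' ↑T)) ≤ d →
        T.card ≤ d * q) :
    M.rank = n ∧
    ∀ c : Fin (n * q) → Fin s, Function.Injective c →
      ∃ e : Fin q → Fin n → Fin (n * q),
        Function.Bijective (fun p : Fin q × Fin n => e p.1 p.2) ∧
        ∀ b : Fin q, (Matrix.of fun i j => M i (c (e b j))).det ≠ 0 :=
  stmt3_general q n s hq M h1 h2
end

section
/- Let d, h, M ∈ ℕ and 0 < ρ ≤ 1. There exists M₁ = M₁(ρ, d, h, M) ∈ ℕ such that the following holds: if S ⊆ ℕ is multiplicatively [M]-syndetic and α ∈ 𝕋^d, then S ∩ B_h(α, ρ) is multiplicatively [M₁]-syndetic, where B_h(α, ρ) = ⋂_{i=1}^d {n ∈ ℕ : ‖n^h α_i‖ < ρ}. -/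
/-!
For `h ≥ 1`, color `n` by the cells of width `1/r` containing the fractional parts of the
`n ^ h * β i`. The homothetic van der Waerden theorem yields a progression `b, b + a, …, b + h a`
on which all these fractional parts are `1/r`-close, so the `h`-th forward difference
`h! a^h β i` is within `2^h / r` of an integer; taking `k = h! a` for the vector `h!^(h-1) β`
makes every `k ^ h * β i` close to an integer. Compactness of `[0,1]^ι` bounds such a `k`
uniformly in `β`, so the Bohr sets `B_h(β, δ) = polyBohr h β δ` are uniformly multiplicatively
syndetic.

Given `x`, pick `k ≤ K` with `k x ∈ B_h(α, ρ / M^h)`, then `m ≤ M` with `m k x ∈ S`: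
multiplying by `m` multiplies the distances to the integers by `m^h ≤ M^h`.
-/

open Finset Function Nat fwdDiff

def MultSyndetic (M : ℕ) (S : Set ℕ) : Prop :=
  ∀ x : ℕ, 0 < x → ∃ m : ℕ, 1 ≤ m ∧ m ≤ M ∧ m * x ∈ S

lemma MultSyndetic.pos {M : ℕ} {S : Set ℕ} (hS : MultSyndetic M S) : 0 < M := by
  obtain ⟨m, hm1, hmM, -⟩ := hS 1 one_pos
  omega

section FwdDiff

variable {M G : Type*} [AddCommMonoid M] [AddCommGroup G] (a : M)

lemma fwdDiff_iter_const_of_ne_zero {n : ℕ} (hn : n ≠ 0) (g : G) :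
    Δ_[a] ^[n] (fun _ : M ↦ g) = 0 := by
  obtain ⟨n, rfl⟩ := Nat.exists_eq_succ_of_ne_zero hn
  rw [iterate_succ_apply, fwdDiff_const, ← Pi.zero_def]
  exact iterate_fixed (funext fun _ ↦ sub_self 0) n

lemma AddMonoidHom.fwdDiff_iter_comp {G' : Type*} [AddCommGroup G'] (e : G →+ G') (f : M → G)
    (n : ℕ) : Δ_[a] ^[n] (e ∘ f) = e ∘ Δ_[a] ^[n] f := by
  induction n with
  | zero => rfl
  | succ n ih =>
    rw [iterate_succ_apply', iterate_succ_apply', ih]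
    funext x
    simp [fwdDiff]

lemma abs_fwdDiff_iter_le (f : M → ℝ) (n : ℕ) (y : M) {ε : ℝ}
    (hf : ∀ k ≤ n, |f (y + k • a)| ≤ ε) : |Δ_[a] ^[n] f y| ≤ 2 ^ n * ε := by
  rw [fwdDiff_iter_eq_sum_shift]
  calc _ ≤ ∑ k ∈ range (n + 1), |((-1 : ℤ) ^ (n - k) * n.choose k) • f (y + k • a)| :=
        abs_sum_le_sum_abs _ _
    _ ≤ ∑ k ∈ range (n + 1), (n.choose k : ℝ) * ε := by
        refine sum_le_sum fun k hk ↦ ?_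
        rw [zsmul_eq_mul, abs_mul]
        push_cast
        rw [abs_mul, abs_pow, abs_neg, abs_one, one_pow, one_mul, Nat.abs_cast]
        exact mul_le_mul_of_nonneg_left (hf k (by simpa [Nat.lt_succ_iff] using hk)) (by positivity)
    _ = 2 ^ n * ε := by
        rw [← sum_mul]
        exact_mod_cast congrArg (· * ε) (congrArg (Nat.cast (R := ℝ)) (Nat.sum_range_choose n))

lemma exists_int_abs_fwdDiff_iter_sub_le (f : M → ℝ) {n : ℕ} (hn : n ≠ 0) (y : M) {t ε : ℝ}
    (hf : ∀ k ≤ n, |Int.fract (f (y + k • a)) - t| ≤ ε) :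
    ∃ z : ℤ, |Δ_[a] ^[n] f y - z| ≤ 2 ^ n * ε := by
  have hsplit : f =
      Int.castAddHom ℝ ∘ (fun x ↦ ⌊f x⌋) + ((fun x ↦ Int.fract (f x) - t) + fun _ ↦ t) := by
    funext x
    simp only [Pi.add_apply, comp_apply, Int.coe_castAddHom, sub_add_cancel, Int.floor_add_fract]
  refine ⟨Δ_[a] ^[n] (fun x ↦ ⌊f x⌋) y, ?_⟩
  rw [hsplit, fwdDiff_iter_add, fwdDiff_iter_add, fwdDiff_iter_const_of_ne_zero a hn, add_zero,
    AddMonoidHom.fwdDiff_iter_comp]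
  simpa using abs_fwdDiff_iter_le a _ n y hf

end FwdDiff

lemma fwdDiff_iter_pow_eq_factorial_mul {R : Type*} [CommRing R] (a : R) (n : ℕ) :
    Δ_[a] ^[n] (fun x : R ↦ x ^ n) = fun _ ↦ (n ! : R) * a ^ n := by
  funext y
  have hshift :
      Δ_[a] ^[n] (fun x : R ↦ x ^ n) y = Δ_[1] ^[n] (fun r : R ↦ (r * a + y) ^ n) 0 := by
    simp only [fwdDiff_iter_eq_sum_shift, nsmul_eq_mul, mul_one, add_zero, add_comm]
  have hexpand : (fun r : R ↦ (r * a + y) ^ n) =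
      (fun r ↦ ∑ k ∈ range n, (a ^ k * y ^ (n - k) * n.choose k) * r ^ k) +
        a ^ n • fun r ↦ r ^ n := by
    funext r
    simp only [add_pow, sum_range_succ, mul_pow, Pi.add_apply, Pi.smul_apply, smul_eq_mul]
    simp only [Nat.sub_self, pow_zero, mul_one, Nat.choose_self, Nat.cast_one]
    congr 1
    · exact sum_congr rfl fun k _ ↦ by ring
    · ring
  rw [hshift, hexpand, fwdDiff_iter_add, fwdDiff_iter_sum_mul_pow_eq_zero, fwdDiff_iter_const_smul,
    fwdDiff_iter_eq_factorial]
  simp [mul_comm]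

noncomputable def fractCell (r : ℕ) (x : ℝ) : Fin (r + 1) :=
  ⟨⌊Int.fract x * r⌋₊, Nat.lt_succ_of_le <| Nat.floor_le_of_le <|
    mul_le_of_le_one_left (Nat.cast_nonneg r) (Int.fract_lt_one x).le⟩

lemma abs_fract_sub_fract_lt_of_fractCell_eq {r : ℕ} (hr : 0 < r) {x y : ℝ}
    (hxy : fractCell r x = fractCell r y) : |Int.fract x - Int.fract y| < 1 / r := by
  have hfloor : ⌊Int.fract x * r⌋₊ = ⌊Int.fract y * r⌋₊ := congrArg Fin.val hxy
  have hx := Nat.floor_le (mul_nonneg (Int.fract_nonneg x) (Nat.cast_nonneg r))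
  have hy := Nat.floor_le (mul_nonneg (Int.fract_nonneg y) (Nat.cast_nonneg r))
  have hx' := Nat.lt_floor_add_one (Int.fract x * r)
  have hy' := Nat.lt_floor_add_one (Int.fract y * r)
  rw [hfloor] at hx hx'
  have hr' : (0 : ℝ) < r := by exact_mod_cast hr
  rw [lt_div_iff₀ hr', ← abs_of_pos hr', ← abs_mul, sub_mul, abs_sub_lt_iff]
  constructor <;> linarith

def polyBohr {ι : Type*} (h : ℕ) (β : ι → ℝ) (δ : ℝ) : Set ℕ :=
  {n | ∀ i, ∃ z : ℤ, |(n : ℝ) ^ h * β i - z| < δ}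

section PolyBohr

variable {ι : Type*} {h : ℕ} {δ : ℝ}

lemma polyBohr_mono {δ' : ℝ} (hδ : δ ≤ δ') (β : ι → ℝ) : polyBohr h β δ ⊆ polyBohr h β δ' :=
  fun _ hn i ↦ (hn i).imp fun _ hz ↦ hz.trans_le hδ

lemma mul_mem_polyBohr {β : ι → ℝ} {m n : ℕ} (hm : 0 < m) (hn : n ∈ polyBohr h β δ) :
    m * n ∈ polyBohr h β (m ^ h * δ) := by
  intro i
  obtain ⟨z, hz⟩ := hn i
  refine ⟨m ^ h * z, ?_⟩
  have hmh : (0 : ℝ) < (m : ℝ) ^ h := by positivity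
  calc |((m * n : ℕ) : ℝ) ^ h * β i - ((m ^ h * z : ℤ) : ℝ)|
      = (m : ℝ) ^ h * |(n : ℝ) ^ h * β i - z| := by
        rw [← abs_of_pos hmh, ← abs_mul]
        push_cast
        ring_nf
    _ < (m : ℝ) ^ h * δ := by gcongr

lemma mem_polyBohr_pow_mul_iff {β : ι → ℝ} {k x : ℕ} :
    k ∈ polyBohr h (fun i ↦ (x : ℝ) ^ h * β i) δ ↔ k * x ∈ polyBohr h β δ := by
  simp only [polyBohr, Set.mem_ofPred_eq, Nat.cast_mul, mul_pow, mul_assoc]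

lemma mem_polyBohr_of_mem_polyBohr_fract {β : ι → ℝ} {n : ℕ}
    (hn : n ∈ polyBohr h (fun i ↦ Int.fract (β i)) δ) : n ∈ polyBohr h β δ := by
  intro i
  obtain ⟨z, hz⟩ := hn i
  refine ⟨z + n ^ h * ⌊β i⌋, ?_⟩
  convert hz using 2
  dsimp only
  rw [← Int.self_sub_floor (β i)]
  push_cast
  ring

lemma isOpen_setOf_mem_polyBohr [Finite ι] (h n : ℕ) (δ : ℝ) :
    IsOpen {β : ι → ℝ | n ∈ polyBohr h β δ} := by
  have hset : {β : ι → ℝ | n ∈ polyBohr h β δ} =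
      ⋂ i, ⋃ z : ℤ, {β | |(n : ℝ) ^ h * β i - z| < δ} := by
    ext
    simp [polyBohr]
  rw [hset]
  exact isOpen_iInter_of_finite fun i ↦ isOpen_iUnion fun z ↦
    isOpen_lt ((continuous_const.mul (continuous_apply i)).sub continuous_const).abs
      continuous_const

end PolyBohr

section PolyRecurrence

variable {ι : Type*} [Finite ι] {h : ℕ} {δ : ℝ}

lemma exists_pos_factorial_mul_pow_mul_near_int (hh : h ≠ 0) (hδ : 0 < δ) (β : ι → ℝ) :
    ∃ a : ℕ, 0 < a ∧ ∀ i, ∃ z : ℤ, |(h ! : ℝ) * (a : ℝ) ^ h * β i - z| < δ := by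
  obtain ⟨r, hr⟩ := exists_nat_gt (2 ^ h / δ)
  have hr0 : 0 < r := by exact_mod_cast (div_pos (by positivity) hδ).trans hr
  have hrδ : (2 : ℝ) ^ h * (1 / r) < δ := by
    rw [← div_eq_mul_one_div, div_lt_iff₀ (by positivity)]
    rwa [div_lt_iff₀ hδ, mul_comm] at hr
  obtain ⟨a, ha, b, c, hc⟩ := Combinatorics.exists_mono_homothetic_copy (range (h + 1))
    fun n i ↦ fractCell r ((n : ℝ) ^ h * β i)
  refine ⟨a, ha, fun i ↦ ?_⟩
  set f : ℝ → ℝ := fun x ↦ x ^ h * β i with hf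
  have hcell : ∀ k ≤ h, |Int.fract (f (b + k • a)) - Int.fract (f b)| ≤ 1 / r := by
    intro k hk
    have hck := congrFun ((hc k (mem_range.2 (by omega))).trans (hc 0 (by simp)).symm) i
    refine (abs_fract_sub_fract_lt_of_fractCell_eq hr0 ?_).le
    simpa [hf, mul_comm a, add_comm] using hck
  obtain ⟨z, hz⟩ := exists_int_abs_fwdDiff_iter_sub_le (a : ℝ) f hh (b : ℝ) hcell
  have hdiff : Δ_[(a : ℝ)] ^[h] f b = (h ! : ℝ) * (a : ℝ) ^ h * β i := by
    rw [show f = β i • fun x : ℝ ↦ x ^ h by funext x; simp [hf, mul_comm],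
      fwdDiff_iter_const_smul, fwdDiff_iter_pow_eq_factorial_mul]
    simp [mul_comm]
  exact ⟨z, hdiff ▸ hz.trans_lt hrδ⟩

lemma exists_pos_mem_polyBohr (hh : h ≠ 0) (hδ : 0 < δ) (β : ι → ℝ) :
    ∃ k : ℕ, 0 < k ∧ k ∈ polyBohr h β δ := by
  obtain ⟨a, ha, hA⟩ :=
    exists_pos_factorial_mul_pow_mul_near_int hh hδ fun i ↦ (h ! : ℝ) ^ (h - 1) * β i
  refine ⟨h ! * a, by positivity, fun i ↦ ?_⟩
  obtain ⟨z, hz⟩ := hA i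
  refine ⟨z, ?_⟩
  convert hz using 3
  push_cast
  rw [mul_pow, ← mul_pow_sub_one hh (h ! : ℝ)]
  ring

lemma exists_forall_exists_mem_Icc_mem_polyBohr (hh : h ≠ 0) (hδ : 0 < δ) :
    ∃ K : ℕ, ∀ β : ι → ℝ, ∃ k ∈ Icc 1 K, k ∈ polyBohr h β δ := by
  set U : ℕ → Set (ι → ℝ) := fun K ↦ ⋃ k ∈ Icc 1 K, {β | k ∈ polyBohr h β δ}
  have hU : Monotone U := fun K L hKL ↦
    Set.biUnion_mono (fun k hk ↦ Icc_subset_Icc_right hKL hk) fun _ _ ↦ subset_rfl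
  obtain ⟨K, hK⟩ := (isCompact_Icc (a := (0 : ι → ℝ)) (b := 1)).elim_directed_cover U
    (fun K ↦ isOpen_biUnion fun k _ ↦ isOpen_setOf_mem_polyBohr h k δ)
    (fun β _ ↦ by
      obtain ⟨k, hk, hkβ⟩ := exists_pos_mem_polyBohr hh hδ β
      exact Set.mem_iUnion.2 ⟨k, Set.mem_biUnion (mem_Icc.2 ⟨hk, le_rfl⟩) hkβ⟩)
    hU.directed_le
  refine ⟨K, fun β ↦ ?_⟩
  have hfract : (fun i ↦ Int.fract (β i)) ∈ Set.Icc (0 : ι → ℝ) 1 :=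
    ⟨fun i ↦ Int.fract_nonneg _, fun i ↦ (Int.fract_lt_one _).le⟩
  obtain ⟨k, hk, hkβ⟩ := Set.mem_iUnion₂.1 (hK hfract)
  exact ⟨k, hk, mem_polyBohr_of_mem_polyBohr_fract hkβ⟩

lemma exists_forall_multSyndetic_polyBohr (hh : h ≠ 0) (hδ : 0 < δ) :
    ∃ K : ℕ, ∀ β : ι → ℝ, MultSyndetic K (polyBohr h β δ) := by
  obtain ⟨K, hK⟩ := exists_forall_exists_mem_Icc_mem_polyBohr (ι := ι) hh hδ
  refine ⟨K, fun β x _ ↦ ?_⟩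
  obtain ⟨k, hk, hkβ⟩ := hK fun i ↦ (x : ℝ) ^ h * β i
  exact ⟨k, (mem_Icc.1 hk).1, (mem_Icc.1 hk).2, mem_polyBohr_pow_mul_iff.1 hkβ⟩

end PolyRecurrence

theorem stmt6_general (d h M : ℕ) (hh : 0 < h) (hM : 0 < M)
    (ρ : ℝ) (hρ0 : 0 < ρ) :
    ∃ M₁ : ℕ, 0 < M₁ ∧ ∀ (S : Set ℕ), MultSyndetic M S → ∀ α : Fin d → ℝ,
      MultSyndetic M₁
        (S ∩ {n : ℕ | ∀ i : Fin d, ∃ z : ℤ, |((n : ℝ) ^ h * α i - z)| < ρ}) := by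
  obtain ⟨K, hK⟩ :=
    exists_forall_multSyndetic_polyBohr (ι := Fin d) hh.ne' (δ := ρ / M ^ h) (by positivity)
  refine ⟨M * K, Nat.mul_pos hM (hK 0).pos, fun S hS α x hx ↦ ?_⟩
  obtain ⟨k, hk1, hkK, hkα⟩ := hK α x hx
  obtain ⟨m, hm1, hmM, hmS⟩ := hS (k * x) (by positivity)
  have hmρ : (m : ℝ) ^ h * (ρ / M ^ h) ≤ ρ := by
    rw [mul_div_assoc', div_le_iff₀ (by positivity), mul_comm]
    gcongr
  refine ⟨m * k, Nat.one_le_iff_ne_zero.2 (by positivity), Nat.mul_le_mul hmM hkK, ?_⟩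
  rw [mul_assoc]
  exact ⟨hmS, polyBohr_mono hmρ α (mul_mem_polyBohr hm1 hkα)⟩

/-- **Syndeticity for Bohr–syndetic intersections.** For `d, h, M ∈ ℕ` and
`0 < ρ ≤ 1` there is `M₁ = M₁(ρ,d,h,M)` such that whenever `S` is multiplicatively
`[M]`-syndetic and `α ∈ 𝕋^d`, the set `S ∩ B_h(α,ρ)` is multiplicatively
`[M₁]`-syndetic, where `B_h(α,ρ) = ⋂_{i=1}^d {n : ‖n^h α_i‖ < ρ}`. -/
theorem stmt6 (d h M : ℕ) (hd : 0 < d) (hh : 0 < h) (hM : 0 < M)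
    (ρ : ℝ) (hρ0 : 0 < ρ) (hρ1 : ρ ≤ 1) :
    ∃ M₁ : ℕ, 0 < M₁ ∧ ∀ (S : Set ℕ), MultSyndetic M S → ∀ α : Fin d → ℝ,
      MultSyndetic M₁
        (S ∩ {n : ℕ | ∀ i : Fin d, ∃ z : ℤ, |((n : ℝ) ^ h * α i - z)| < ρ}) :=
  stmt6_general d h M hh hM ρ hρ0
end

section
/- Let M ∈ ℤ^{h×k} be a matrix of rank h satisfying: for every nonzero vector v = (v_1,...,v_k) in the row space of M, there exists a nonempty set J ⊆ {1,...,k} with v_j ≠ 0 for all j ∈ J and ∑_{j∈J} v_j = 0. Suppose also M obeys the columns condition. Then M is equivalent (under column permutations and elementary row operations) to a block matrix of the form [[A, B],[0, C]] where A ∈ ℤ^{n×s} has rank n and columns summing to the zero vector, and C ∈ ℤ^{m×t} obeys the columns condition (with h = n+m, k = s+t, n, s ≥ 1, m, t ≥ 0). -/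
open Finset

/-!
Record the block of each column as a level `f j`: the columns condition then says that the
columns of each level sum into the span of the columns of lower levels. If `q` is the lowest level
containing a nonzero column, every column below `q` vanishes, so the columns of level `≤ q` sum to
zero; they become the columns of `A`. Take as rows of `R` a basis of a complement of the left
kernel of these columns followed by a basis of that kernel, scaled by a common denominator so that
`R * M` is integral: the first `n` rows are independent on these columns and the last `m` rows
vanish on them. As the last rows kill the columns of `A`, they carry the levels `> q` of `M` to a
witness of the columns condition for `C`.
-/

/-- A matrix `M ∈ ℤ^{h×k}` obeys Rado's **columns condition** if its column index
set can be partitioned into nonempty blocks `J_0, …, J_{p-1}` such that the columns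
in `J_0` sum to zero and, for each later block, the sum of its columns lies in the
`ℚ`-linear span of the columns in all earlier blocks. -/
def ColumnsCondition {h k : ℕ} (M : Matrix (Fin h) (Fin k) ℤ) : Prop :=
  ∃ (p : ℕ) (J : Fin p → Finset (Fin k)),
    (∀ i₁ i₂ : Fin p, i₁ ≠ i₂ → Disjoint (J i₁) (J i₂)) ∧
    (Finset.univ.biUnion J = Finset.univ) ∧
    (∀ i, (J i).Nonempty) ∧
    (∀ i : Fin p, (i : ℕ) = 0 →
      ∑ j ∈ J i, (fun r : Fin h => (M r j : ℚ)) = 0) ∧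
    (∀ i : Fin p, 0 < (i : ℕ) →
      (∑ j ∈ J i, fun r : Fin h => (M r j : ℚ)) ∈
        Submodule.span ℚ ((fun j : Fin k => fun r : Fin h => (M r j : ℚ)) ''
          {j : Fin k | ∃ i' : Fin p, (i' : ℕ) < (i : ℕ) ∧ j ∈ J i'}))

section SpanGrading

variable (R : Type*) {V W ι κ : Type*} [Semiring R] [AddCommMonoid V] [Module R V]
  [AddCommMonoid W] [Module R W] [Fintype ι] [Fintype κ]

/-- The columns condition with the block of each column recorded as its level `f j`; levels may
be empty, which removes all bookkeeping about the number and nonemptiness of blocks. -/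
def IsSpanGrading (v : ι → V) (f : ι → ℕ) : Prop :=
  ∀ ℓ, ∑ j with f j = ℓ, v j ∈ Submodule.span R (v '' {j | f j < ℓ})

variable {R}

theorem IsSpanGrading.exists_sum_eq_zero {v : ι → V} {f : ι → ℕ} (hf : IsSpanGrading R v f)
    (hv : ∃ j, v j ≠ 0) : ∃ q, (∃ j, f j ≤ q ∧ v j ≠ 0) ∧ ∑ j with f j ≤ q, v j = 0 := by
  classical
  have hex : ∃ ℓ, ∃ j, f j = ℓ ∧ v j ≠ 0 := let ⟨j, hj⟩ := hv; ⟨f j, j, rfl, hj⟩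
  obtain ⟨q, ⟨j₀, hj₀, hvj₀⟩, hbelow⟩ :
      ∃ q, (∃ j, f j = q ∧ v j ≠ 0) ∧ ∀ j, f j < q → v j = 0 :=
    ⟨Nat.find hex, Nat.find_spec hex, fun j hj =>
      by_contra fun hvj => Nat.find_min hex hj ⟨j, rfl, hvj⟩⟩
  have hspan : Submodule.span R (v '' {j | f j < q}) = ⊥ := by
    rw [Submodule.span_eq_bot]
    rintro _ ⟨j, hj, rfl⟩
    exact hbelow j hj
  have hlevel := hf q
  rw [hspan, Submodule.mem_bot] at hlevel
  refine ⟨q, ⟨j₀, hj₀.le, hvj₀⟩, .trans ?_ hlevel⟩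
  refine (Finset.sum_subset (fun j => by simp +contextual) fun j hj hjq => hbelow j ?_).symm
  simp only [mem_filter, mem_univ, true_and] at hj hjq
  omega

theorem IsSpanGrading.comp_linearMap {v : ι → V} {f : ι → ℕ} (hf : IsSpanGrading R v f)
    (F : V →ₗ[R] W) {g : κ → ι} (hg : Function.Injective g)
    (hF : ∀ j ∉ Set.range g, F (v j) = 0) : IsSpanGrading R (F ∘ v ∘ g) (f ∘ g) := by
  classical
  intro ℓ
  have hsum : ∑ b with f (g b) = ℓ, F (v (g b)) = F (∑ j with f j = ℓ, v j) := by
    rw [map_sum]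
    simp only [Finset.sum_filter]
    exact Fintype.sum_of_injective g hg _ _ (fun j hj => by simp [hF j hj]) fun _ => rfl
  simp only [Function.comp_apply, hsum]
  have hmem := Submodule.mem_map_of_mem (f := F) (hf ℓ)
  rw [Submodule.map_span, ← Set.image_comp] at hmem
  refine Submodule.span_le.mpr ?_ hmem
  rintro _ ⟨j, hj, rfl⟩
  by_cases hjg : j ∈ Set.range g
  · obtain ⟨b, rfl⟩ := hjg
    exact Submodule.subset_span ⟨b, hj, rfl⟩
  · simp [hF j hjg]

end SpanGrading

theorem ColumnsCondition.exists_isSpanGrading {h k : ℕ} {M : Matrix (Fin h) (Fin k) ℤ}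
    (hcc : ColumnsCondition M) : ∃ f, IsSpanGrading ℚ (fun j r => (M r j : ℚ)) f := by
  classical
  obtain ⟨p, J, hdisj, hcover, -, hzero, hspan⟩ := hcc
  have hex : ∀ j, ∃ i, j ∈ J i := fun j => by
    have hj := mem_univ j
    rw [← hcover] at hj
    simpa using hj
  choose c hc using hex
  have hblock : ∀ j i, j ∈ J i ↔ c j = i := fun j i =>
    ⟨fun hj => by_contra fun hne => disjoint_left.mp (hdisj _ _ hne) (hc j) hj,
      fun h => h ▸ hc j⟩
  refine ⟨fun j => c j, fun ℓ => ?_⟩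
  by_cases hℓ : ℓ < p
  · have hfib : univ.filter (fun j => (c j : ℕ) = ℓ) = J ⟨ℓ, hℓ⟩ := by
      ext j; simp [hblock, Fin.ext_iff]
    have hlow : {j | (c j : ℕ) < ℓ} = {j | ∃ i' : Fin p, (i' : ℕ) < ℓ ∧ j ∈ J i'} := by
      ext j; simp [hblock]
    rw [hfib, hlow]
    rcases Nat.eq_zero_or_pos ℓ with rfl | hpos
    · rw [hzero ⟨0, hℓ⟩ rfl]; exact zero_mem _
    · exact hspan ⟨ℓ, hℓ⟩ hpos
  · have hfib : univ.filter (fun j => (c j : ℕ) = ℓ) = ∅ :=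
      filter_eq_empty_iff.mpr fun j _ => by have := (c j).isLt; omega
    rw [hfib, sum_empty]; exact zero_mem _

/-- The nonempty levels of `f`, listed in increasing order, are the blocks. -/
theorem ColumnsCondition.of_isSpanGrading {h k : ℕ} {M : Matrix (Fin h) (Fin k) ℤ} {f : Fin k → ℕ}
    (hf : IsSpanGrading ℚ (fun j r => (M r j : ℚ)) f) : ColumnsCondition M := by
  classical
  set e := (univ.image f).orderEmbOfFin rfl
  have hval : ∀ j, ∃ i, f j = e i := fun j => by
    have : f j ∈ Set.range e := by simp [e, Finset.range_orderEmbOfFin]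
    exact this.imp fun i hi => hi.symm
  have hspan : ∀ i : Fin _, ∑ j with f j = e i, (fun r => (M r j : ℚ)) ∈
      Submodule.span ℚ ((fun j r => (M r j : ℚ)) ''
        {j | ∃ i' : Fin _, (i' : ℕ) < (i : ℕ) ∧ j ∈ univ.filter (f · = e i')}) := fun i => by
    convert hf (e i) using 4
    ext j
    obtain ⟨i', hi'⟩ := hval j
    simp [hi']
  refine ⟨_, fun i => univ.filter (f · = e i), fun i₁ i₂ hne => ?_, ?_, fun i => ?_,
    fun i hi => ?_, fun i _ => hspan i⟩
  · exact disjoint_filter.mpr fun j _ h₁ h₂ => hne (e.injective (h₁.symm.trans h₂))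
  · ext j; simpa [eq_comm] using hval j
  · obtain ⟨j, -, hj⟩ := mem_image.mp ((univ.image f).orderEmbOfFin_mem rfl i)
    exact ⟨j, by simpa using hj⟩
  · have := hspan i
    simp only [hi, not_lt_zero, false_and, exists_false, Set.ofPred_false, Set.image_empty,
      Submodule.span_empty, Submodule.mem_bot] at this
    exact this

theorem exists_finSumEquiv_of_pred {ι : Type*} [Fintype ι] (p : ι → Prop) [DecidablePred p] :
    ∃ (s t : ℕ) (ε : Fin s ⊕ Fin t ≃ ι), (∀ a, p (ε (.inl a))) ∧ ∀ b, ¬p (ε (.inr b)) :=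
  ⟨_, _, (Equiv.sumCongr (Fintype.equivFin _).symm (Fintype.equivFin _).symm).trans
    (Equiv.sumCompl p), fun a => ((Fintype.equivFin _).symm a).2,
    fun b => ((Fintype.equivFin _).symm b).2⟩

theorem sum_comp_inl_eq_sum_filter {ι M : Type*} [Fintype ι] [AddCommMonoid M] {p : ι → Prop}
    [DecidablePred p] {s t : ℕ} {ε : Fin s ⊕ Fin t ≃ ι} (hl : ∀ a, p (ε (.inl a)))
    (hr : ∀ b, ¬p (ε (.inr b))) (g : ι → M) : ∑ a, g (ε (.inl a)) = ∑ j with p j, g j := by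
  rw [sum_filter, ← ε.sum_comp, Fintype.sum_sum_type]
  simp [hl, hr]

theorem ColumnsCondition.exists_columns_ne_zero_sum_eq_zero {h k : ℕ} {M : Matrix (Fin h) (Fin k) ℤ}
    (hcc : ColumnsCondition M) (hM : M ≠ 0) :
    ∃ (s t : ℕ) (ε : Fin s ⊕ Fin t ≃ Fin k), (∃ r a, M r (ε (.inl a)) ≠ 0) ∧
      ∀ r, ∑ a, M r (ε (.inl a)) = 0 := by
  classical
  obtain ⟨f, hf⟩ := hcc.exists_isSpanGrading
  have hv : ∃ j, (fun r => (M r j : ℚ)) ≠ 0 := by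
    by_contra! h0
    exact hM (Matrix.ext fun r j => by simpa using congrFun (h0 j) r)
  obtain ⟨q, ⟨j₀, hj₀, hvj₀⟩, hsum⟩ := hf.exists_sum_eq_zero hv
  obtain ⟨s, t, ε, hl, hr⟩ := exists_finSumEquiv_of_pred (fun j => f j ≤ q)
  refine ⟨s, t, ε, ?_, fun r => ?_⟩
  · obtain ⟨r, hr₀⟩ := Function.ne_iff.mp hvj₀
    rcases hx : ε.symm j₀ with a | b
    · exact ⟨r, a, by rw [← hx, Equiv.apply_symm_apply]; simpa using hr₀⟩
    · exact absurd hj₀ (by simpa [← hx] using hr b)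
  · have := (sum_comp_inl_eq_sum_filter hl hr fun j => (M r j : ℚ)).trans
      (by simpa using congrFun hsum r)
    exact_mod_cast this

theorem ColumnsCondition.submatrix_of_map_eq_mul {h k m t : ℕ} {ι : Type*} [Fintype ι]
    {M : Matrix (Fin h) (Fin k) ℤ} (hcc : ColumnsCondition M) {Y : Matrix (Fin m) (Fin k) ℤ}
    (L : Matrix (Fin m) (Fin h) ℚ) (hY : Y.map (Int.cast : ℤ → ℚ) = L * M.map (Int.cast : ℤ → ℚ))
    (ε : ι ⊕ Fin t ≃ Fin k) (hY0 : ∀ i a, Y i (ε (.inl a)) = 0) :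
    ColumnsCondition (Y.submatrix id (ε ∘ Sum.inr)) := by
  obtain ⟨f, hf⟩ := hcc.exists_isSpanGrading
  have hcol : ∀ j, L.mulVecLin (fun r => (M r j : ℚ)) = fun i => (Y i j : ℚ) := fun j => by
    funext i
    exact (congrFun (congrFun hY i) j).symm
  have hvanish : ∀ j ∉ Set.range (ε ∘ Sum.inr), L.mulVecLin (fun r => (M r j : ℚ)) = 0 := by
    intro j hj
    rcases hx : ε.symm j with a | b
    · rw [hcol, ← ε.apply_symm_apply j, hx]
      funext i
      simp [hY0]
    · exact absurd ⟨b, by simp [← hx]⟩ hj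
  have := hf.comp_linearMap L.mulVecLin (ε.injective.comp Sum.inr_injective) hvanish
  exact ColumnsCondition.of_isSpanGrading (f := f ∘ ε ∘ Sum.inr) (by
    simpa [Function.comp_def, hcol] using this)

theorem Matrix.exists_intCast_eq_smul {ι κ : Type*} [Finite ι] [Finite κ] (P : Matrix ι κ ℚ) :
    ∃ d : ℤ, d ≠ 0 ∧ ∃ Z : Matrix ι κ ℤ, Z.map (Int.cast : ℤ → ℚ) = (d : ℚ) • P := by
  obtain ⟨d, hd⟩ := IsLocalization.exist_integer_multiples_of_finite (nonZeroDivisors ℤ)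
    fun x : ι × κ => P x.1 x.2
  choose Z hZ using hd
  exact ⟨d, nonZeroDivisors.coe_ne_zero d, Matrix.of fun i j => Z (i, j), by
    ext i j; simpa [zsmul_eq_mul] using hZ (i, j)⟩

theorem Matrix.exists_isUnit_mul_eq_zero_bottom_rows {K ι : Type*} [Field K] [Fintype ι] {h : ℕ}
    (N : Matrix (Fin h) ι K) :
    ∃ (n m : ℕ) (hnm : h = n + m) (R : Matrix (Fin h) (Fin h) K), IsUnit R ∧
      (∀ i, (R * N) (Fin.cast hnm.symm (Fin.natAdd n i)) = 0) ∧
      LinearIndependent K fun i => (R * N) (Fin.cast hnm.symm (Fin.castAdd m i)) := by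
  classical
  obtain ⟨W, hW⟩ := (LinearMap.ker N.vecMulLinear).exists_isCompl
  have hnm := ((Submodule.finrank_add_eq_of_isCompl hW.symm).trans (Module.finrank_fin_fun K)).symm
  let b := ((Module.finBasis K W).prod (Module.finBasis K _)).map (W.prodEquivOfIsCompl _ hW.symm)
  let R : Matrix (Fin h) (Fin h) K := Matrix.of fun r => b (finSumFinEquiv.symm (Fin.cast hnm r))
  have hR : ∀ x, (R * N) (Fin.cast hnm.symm (finSumFinEquiv x)) = N.vecMulLinear (b x) := by
    intro x
    rw [Matrix.mul_apply_eq_vecMul]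
    change Matrix.vecMul (b (finSumFinEquiv.symm (Fin.cast hnm (Fin.cast hnm.symm _)))) N = _
    simp
  refine ⟨_, _, hnm, R, ?_, fun i => ?_, ?_⟩
  · exact Matrix.linearIndependent_rows_iff_isUnit.mp <|
      b.linearIndependent.comp _ ((finCongr hnm).trans finSumFinEquiv.symm).injective
  · simpa [b] using hR (.inr i)
  · have hker : LinearMap.ker (N.vecMulLinear ∘ₗ W.subtype) = ⊥ := by
      rw [LinearMap.ker_comp]
      exact Submodule.disjoint_iff_comap_eq_bot.mp hW.symm.disjoint
    have hrows : (fun i => (R * N) (Fin.cast hnm.symm (Fin.castAdd _ i))) =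
        (N.vecMulLinear ∘ₗ W.subtype) ∘ Module.finBasis K W := by
      funext i
      simpa [b] using hR (.inl i)
    rw [hrows]
    exact (Module.finBasis K W).linearIndependent.map' _ hker

theorem Matrix.pos_of_mul_natAdd_rows_eq_zero {K ι : Type*} [Field K] [Fintype ι] {h n m : ℕ}
    {N : Matrix (Fin h) ι K} (hN : N ≠ 0) {R : Matrix (Fin h) (Fin h) K} (hR : IsUnit R)
    (hnm : h = n + m) (hbot : ∀ i, (R * N) (Fin.cast hnm.symm (Fin.natAdd n i)) = 0) : 0 < n := by
  refine Nat.pos_of_ne_zero fun hn => hN ?_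
  subst hn
  have hRN : R * N = 0 := by
    ext r a
    obtain ⟨i, rfl⟩ : ∃ i, r = Fin.cast hnm.symm (Fin.natAdd 0 i) :=
      ⟨Fin.cast (by omega) r, Fin.ext (by simp)⟩
    exact congrFun (hbot i) a
  calc N = R⁻¹ * (R * N) :=
        (Matrix.nonsing_inv_mul_cancel_left R N ((Matrix.isUnit_iff_isUnit_det R).mp hR)).symm
    _ = 0 := by rw [hRN, Matrix.mul_zero]

theorem Matrix.exists_isUnit_mul_eq_intCast {h k : ℕ} {ι : Type*} [Fintype ι]
    (M : Matrix (Fin h) (Fin k) ℤ) (g : ι → Fin k) (hM : ∃ r a, M r (g a) ≠ 0) :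
    ∃ (n m : ℕ) (hnm : h = n + m) (R : Matrix (Fin h) (Fin h) ℚ) (Z : Matrix (Fin h) (Fin k) ℤ),
      0 < n ∧ IsUnit R ∧ Z.map (Int.cast : ℤ → ℚ) = R * M.map (Int.cast : ℤ → ℚ) ∧
      (∀ i a, Z (Fin.cast hnm.symm (Fin.natAdd n i)) (g a) = 0) ∧
      LinearIndependent ℚ fun i a => (Z (Fin.cast hnm.symm (Fin.castAdd m i)) (g a) : ℚ) := by
  set N := (M.map (Int.cast : ℤ → ℚ)).submatrix id g
  obtain ⟨n, m, hnm, R, hR, hbot, hind⟩ := N.exists_isUnit_mul_eq_zero_bottom_rows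
  obtain ⟨d, hd, Z, hZ⟩ := (R * M.map (Int.cast : ℤ → ℚ)).exists_intCast_eq_smul
  have hd' : (d : ℚ) ≠ 0 := by exact_mod_cast hd
  have hZN : ∀ r a, (Z r (g a) : ℚ) = d * (R * N) r a := fun r a => by
    have := congrFun (congrFun hZ r) (g a)
    simp only [Matrix.map_apply, Matrix.smul_apply, smul_eq_mul] at this
    exact this
  have hN : N ≠ 0 := by
    obtain ⟨r, a, hra⟩ := hM
    exact fun hN => hra (by simpa [N] using congrFun (congrFun hN r) a)
  refine ⟨n, m, hnm, (d : ℚ) • R, Z, Matrix.pos_of_mul_natAdd_rows_eq_zero hN hR hnm hbot,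
    hR.smul (Units.mk0 (d : ℚ) hd'), by rw [hZ, Matrix.smul_mul], fun i a => ?_, ?_⟩
  · have := hZN (Fin.cast hnm.symm (Fin.natAdd n i)) a
    rw [hbot i] at this
    simpa using this
  · have hrows : (fun i a => (Z (Fin.cast hnm.symm (Fin.castAdd m i)) (g a) : ℚ)) =
        (fun _ : Fin n => Units.mk0 (d : ℚ) hd') •
          fun i => (R * N) (Fin.cast hnm.symm (Fin.castAdd m i)) := by
      funext i a
      simp [hZN]
    rw [hrows]
    exact hind.units_smul _

theorem Matrix.sum_apply_eq_zero_of_map_eq_mul {h k : ℕ} {ι : Type*} [Fintype ι]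
    {M Z : Matrix (Fin h) (Fin k) ℤ} {R : Matrix (Fin h) (Fin h) ℚ}
    (hZ : Z.map (Int.cast : ℤ → ℚ) = R * M.map (Int.cast : ℤ → ℚ)) {g : ι → Fin k}
    (hM : ∀ r, ∑ a, M r (g a) = 0) (r : Fin h) : ∑ a, Z r (g a) = 0 := by
  have hcast : ∀ a, (Z r (g a) : ℚ) = ∑ x, R r x * M x (g a) := fun a => by
    have := congrFun (congrFun hZ r) (g a)
    rw [Matrix.map_apply, Matrix.mul_apply] at this
    simpa using this
  have : (∑ a, Z r (g a) : ℚ) = 0 := calc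
    _ = ∑ x, R r x * ((∑ a, M x (g a) : ℤ) : ℚ) := by
      simp only [hcast, Int.cast_sum, mul_sum]; exact sum_comm
    _ = 0 := by simp [hM]
  exact_mod_cast this

def Matrix.toSumBlocks {α : Type*} {h k n m s t : ℕ} (Z : Matrix (Fin h) (Fin k) α)
    (hnm : h = n + m) (ε : Fin s ⊕ Fin t ≃ Fin k) : Matrix (Fin n ⊕ Fin m) (Fin s ⊕ Fin t) α :=
  Z.submatrix (fun x => Fin.cast hnm.symm (finSumFinEquiv x)) ε

theorem Matrix.mul_submatrix_eq_reindex_fromBlocks {h k n m s t : ℕ}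
    {M Z : Matrix (Fin h) (Fin k) ℤ} {R : Matrix (Fin h) (Fin h) ℚ}
    (hZ : Z.map (Int.cast : ℤ → ℚ) = R * M.map (Int.cast : ℤ → ℚ)) (hnm : h = n + m)
    (hst : k = s + t) (ε : Fin s ⊕ Fin t ≃ Fin k) (h21 : (Z.toSumBlocks hnm ε).toBlocks₂₁ = 0) :
    R * (M.map (Int.cast : ℤ → ℚ)).submatrix id
        ((finCongr hst).trans (finSumFinEquiv.symm.trans ε)) =
      (reindex finSumFinEquiv finSumFinEquiv
        (fromBlocks ((Z.toSumBlocks hnm ε).toBlocks₁₁.map (Int.cast : ℤ → ℚ))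
          ((Z.toSumBlocks hnm ε).toBlocks₁₂.map (Int.cast : ℤ → ℚ)) 0
          ((Z.toSumBlocks hnm ε).toBlocks₂₂.map (Int.cast : ℤ → ℚ)))).submatrix
        (Fin.cast hnm) (Fin.cast hst) := by
  have hblocks := (Z.toSumBlocks hnm ε).fromBlocks_toBlocks
  rw [h21] at hblocks
  have hmul : ∀ σ : Fin k → Fin k, R * (M.map (Int.cast : ℤ → ℚ)).submatrix id σ =
      (Z.map (Int.cast : ℤ → ℚ)).submatrix id σ := fun σ => by
    rw [hZ]; rfl
  rw [hmul, ← Matrix.map_zero (Int.cast : ℤ → ℚ) Int.cast_zero, ← Matrix.fromBlocks_map, hblocks]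
  ext r j
  simp [Matrix.toSumBlocks]

theorem stmt7_general (h k : ℕ) (hh : 0 < h) (M : Matrix (Fin h) (Fin k) ℤ)
    (hrank : (M.map (Int.cast : ℤ → ℚ)).rank = h)
    (hcc : ColumnsCondition M) :
    ∃ (n s m t : ℕ) (hn : 0 < n) (hs : 0 < s)
      (hnm : h = n + m) (hst : k = s + t)
      (A : Matrix (Fin n) (Fin s) ℤ) (B : Matrix (Fin n) (Fin t) ℤ)
      (C : Matrix (Fin m) (Fin t) ℤ)
      (R : Matrix (Fin h) (Fin h) ℚ) (σ : Equiv.Perm (Fin k)),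
      IsUnit R ∧
      R * (M.map (Int.cast : ℤ → ℚ)).submatrix id σ =
        (Matrix.reindex finSumFinEquiv finSumFinEquiv
          (Matrix.fromBlocks (A.map (Int.cast : ℤ → ℚ)) (B.map (Int.cast : ℤ → ℚ))
            0 (C.map (Int.cast : ℤ → ℚ)))).submatrix (Fin.cast hnm) (Fin.cast hst) ∧
      (A.map (Int.cast : ℤ → ℚ)).rank = n ∧
      (∀ i : Fin n, ∑ j : Fin s, A i j = 0) ∧
      ColumnsCondition C := by
  have hM : M ≠ 0 := by
    rintro rfl
    simp at hrank
    omega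
  obtain ⟨s, t, ε, hne, hsum⟩ := hcc.exists_columns_ne_zero_sum_eq_zero hM
  have hs : 0 < s := let ⟨_, a, _⟩ := hne; a.pos
  have hst : k = s + t := by simpa using (Fintype.card_congr ε).symm
  obtain ⟨n, m, hnm, R, Z, hn, hR, hZ, hbot, hind⟩ :=
    Matrix.exists_isUnit_mul_eq_intCast M (ε ∘ Sum.inl) hne
  set bot : Fin m → Fin h := fun i => Fin.cast hnm.symm (Fin.natAdd n i)
  refine ⟨n, s, m, t, hn, hs, hnm, hst, (Z.toSumBlocks hnm ε).toBlocks₁₁,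
    (Z.toSumBlocks hnm ε).toBlocks₁₂, (Z.toSumBlocks hnm ε).toBlocks₂₂, R,
    (finCongr hst).trans (finSumFinEquiv.symm.trans ε), hR,
    Matrix.mul_submatrix_eq_reindex_fromBlocks hZ hnm hst ε (Matrix.ext hbot),
    hind.rank_matrix.trans (Fintype.card_fin n),
    fun i => Matrix.sum_apply_eq_zero_of_map_eq_mul hZ hsum _,
    hcc.submatrix_of_map_eq_mul (Y := Z.submatrix bot id) (R.submatrix bot id)
      (by rw [← Matrix.submatrix_map, hZ]; rfl) ε hbot⟩

/-- **Structure from the columns condition (Proposition: (iii)∧(i) ⇒ (iv)).**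
If `M ∈ ℤ^{h×k}` has rank `h`, every nonzero vector of its row space has a nonempty
set of nonzero coordinates summing to zero, and `M` obeys the columns condition,
then `M` is equivalent (column permutations and elementary row operations) to a
block matrix `[[A, B], [0, C]]` with `A ∈ ℤ^{n×s}` of rank `n` whose columns sum to
zero and `C ∈ ℤ^{m×t}` obeying the columns condition. -/
theorem stmt7 (h k : ℕ) (hh : 0 < h) (hk : 0 < k) (M : Matrix (Fin h) (Fin k) ℤ)
    (hrank : (M.map (Int.cast : ℤ → ℚ)).rank = h)
    (hrow : ∀ v : Fin k → ℚ,
      v ∈ Submodule.span ℚ (Set.range fun i : Fin h => fun j : Fin k => (M i j : ℚ)) →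
      v ≠ 0 →
      ∃ J : Finset (Fin k), J.Nonempty ∧ (∀ j ∈ J, v j ≠ 0) ∧ ∑ j ∈ J, v j = 0)
    (hcc : ColumnsCondition M) :
    ∃ (n s m t : ℕ) (hn : 0 < n) (hs : 0 < s)
      (hnm : h = n + m) (hst : k = s + t)
      (A : Matrix (Fin n) (Fin s) ℤ) (B : Matrix (Fin n) (Fin t) ℤ)
      (C : Matrix (Fin m) (Fin t) ℤ)
      (R : Matrix (Fin h) (Fin h) ℚ) (σ : Equiv.Perm (Fin k)),
      IsUnit R ∧
      R * (M.map (Int.cast : ℤ → ℚ)).submatrix id σ =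
        (Matrix.reindex finSumFinEquiv finSumFinEquiv
          (Matrix.fromBlocks (A.map (Int.cast : ℤ → ℚ)) (B.map (Int.cast : ℤ → ℚ))
            0 (C.map (Int.cast : ℤ → ℚ)))).submatrix (Fin.cast hnm) (Fin.cast hst) ∧
      (A.map (Int.cast : ℤ → ℚ)).rank = n ∧
      (∀ i : Fin n, ∑ j : Fin s, A i j = 0) ∧
      ColumnsCondition C :=
  stmt7_general h k hh M hrank hcc
end

section
/- Let M ∈ ℤ^{h×k} have rank h. Suppose M is equivalent to a block matrix [[A, B],[0, C]] where A ∈ ℤ^{n×s} has rank n and columns summing to zero, and C ∈ ℤ^{m×t} satisfies: for every nonzero vector w in the row space of C there is a nonempty set J of indices with w_j ≠ 0 for all j ∈ J and ∑_{j∈J} w_j = 0. Then for every nonzero vector v = (v_1,...,v_k) in the row space of M, there exists a nonempty set J ⊆ {1,...,k} such that v_j ≠ 0 for all j ∈ J and ∑_{j∈J} v_j = 0. -/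
/-!
A row-space vector of `[[A, B], [0, C]]` has the form `(u A, u B + w C)`. Since every row of `A`
sums to zero, so does `u A`, and its support is the required set unless `u A = 0`; in that case
`u = 0` because the rows of `A` are independent, and the second block `w C` is a nonzero vector
of the row space of `C`. Invertible row operations do not change the row space, and a column
permutation only relabels coordinates.
-/

open Finset Matrix

def HasZeroSubsum {ι K : Type*} [AddCommMonoid K] (v : ι → K) : Prop :=
  ∃ J : Finset ι, J.Nonempty ∧ (∀ j ∈ J, v j ≠ 0) ∧ ∑ j ∈ J, v j = 0

namespace HasZeroSubsum

variable {ι κ K : Type*} [AddCommMonoid K]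

theorem of_comp {v : ι → K} {f : κ → ι} (hf : f.Injective) (h : HasZeroSubsum (v ∘ f)) :
    HasZeroSubsum v := by
  obtain ⟨J, hJ, hnz, hsum⟩ := h
  exact ⟨J.map ⟨f, hf⟩, hJ.map, by simpa using hnz, by simpa using hsum⟩

theorem of_sum_eq_zero [Fintype ι] {v : ι → K} (hv : v ≠ 0) (hsum : ∑ j, v j = 0) :
    HasZeroSubsum v := by
  classical
  obtain ⟨j, hj⟩ := Function.ne_iff.mp hv
  exact ⟨univ.filter (v · ≠ 0), ⟨j, by simpa using hj⟩, fun j hj => (mem_filter.mp hj).2,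
    by rwa [sum_filter_ne_zero]⟩

end HasZeroSubsum

namespace Matrix

variable {ι ι' κ κ' K : Type*} [Fintype ι] [Fintype ι']

theorem sum_vecMul_eq_zero [Fintype κ] [NonUnitalNonAssocSemiring K] {A : Matrix ι κ K}
    (hA : ∀ i, ∑ j, A i j = 0) (u : ι → K) : ∑ j, (u ᵥ* A) j = 0 := by
  simp only [vecMul, dotProduct]
  rw [sum_comm]
  simp [← mul_sum, hA]

theorem linearIndependent_row_of_rank_eq_card [Fintype κ] [Field K] {A : Matrix ι κ K}
    (hA : A.rank = Fintype.card ι) : LinearIndependent K A.row := by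
  rw [linearIndependent_iff_card_eq_finrank_span, ← hA, rank_eq_finrank_span_row]
  rfl

theorem vecMul_eq_vecMul_inv_vecMul [CommRing K] [DecidableEq ι] {R : Matrix ι ι K}
    (hR : IsUnit R) {X Y : Matrix ι κ K} (h : R * X = Y) (c : ι → K) :
    c ᵥ* X = (c ᵥ* R⁻¹) ᵥ* Y := by
  rw [← h, vecMul_vecMul, ← Matrix.mul_assoc,
    nonsing_inv_mul _ ((isUnit_iff_isUnit_det R).mp hR), Matrix.one_mul]

theorem hasZeroSubsum_vecMul_fromBlocks [Fintype κ] [Field K] {A : Matrix ι κ K}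
    (B : Matrix ι κ' K) {C : Matrix ι' κ' K} (hA : LinearIndependent K A.row)
    (hAsum : ∀ i, ∑ j, A i j = 0)
    (hC : ∀ w ∈ Submodule.span K (Set.range C.row), w ≠ 0 → HasZeroSubsum w)
    (d : ι ⊕ ι' → K) (hd : d ᵥ* fromBlocks A B 0 C ≠ 0) :
    HasZeroSubsum (d ᵥ* fromBlocks A B 0 C) := by
  rw [vecMul_fromBlocks, vecMul_zero, add_zero] at hd ⊢
  by_cases hx : (d ∘ Sum.inl) ᵥ* A = 0
  · have hd₁ : d ∘ Sum.inl = 0 := vecMul_injective_iff.mpr hA (hx.trans (zero_vecMul A).symm)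
    rw [hx, hd₁, zero_vecMul, zero_add] at hd ⊢
    refine HasZeroSubsum.of_comp Sum.inr_injective (hC _ ?_ fun h => hd ?_)
    · rw [← range_vecMulLinear]
      exact ⟨_, rfl⟩
    · rw [Sum.elim_comp_inr] at h
      rw [h, Sum.elim_zero_zero]
  · exact HasZeroSubsum.of_comp Sum.inl_injective
      (.of_sum_eq_zero hx (sum_vecMul_eq_zero hAsum _))

end Matrix

theorem stmt8_general (h k n s m t : ℕ) (hnm : h = n + m) (hst : k = s + t)
    (M : Matrix (Fin h) (Fin k) ℤ)
    (A : Matrix (Fin n) (Fin s) ℤ) (B : Matrix (Fin n) (Fin t) ℤ)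
    (C : Matrix (Fin m) (Fin t) ℤ)
    (R : Matrix (Fin h) (Fin h) ℚ) (σ : Equiv.Perm (Fin k))
    (hR : IsUnit R)
    (heq : R * (M.map (Int.cast : ℤ → ℚ)).submatrix id σ =
      (Matrix.reindex finSumFinEquiv finSumFinEquiv
        (Matrix.fromBlocks (A.map (Int.cast : ℤ → ℚ)) (B.map (Int.cast : ℤ → ℚ))
          0 (C.map (Int.cast : ℤ → ℚ)))).submatrix (Fin.cast hnm) (Fin.cast hst))
    (hArank : (A.map (Int.cast : ℤ → ℚ)).rank = n)
    (hAcols : ∀ i : Fin n, ∑ j : Fin s, A i j = 0)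
    (hC : ∀ w : Fin t → ℚ,
      w ∈ Submodule.span ℚ (Set.range fun i : Fin m => fun j : Fin t => (C i j : ℚ)) →
      w ≠ 0 →
      ∃ J : Finset (Fin t), J.Nonempty ∧ (∀ j ∈ J, w j ≠ 0) ∧ ∑ j ∈ J, w j = 0) :
    ∀ v : Fin k → ℚ,
      v ∈ Submodule.span ℚ (Set.range fun i : Fin h => fun j : Fin k => (M i j : ℚ)) →
      v ≠ 0 →
      ∃ J : Finset (Fin k), J.Nonempty ∧ (∀ j ∈ J, v j ≠ 0) ∧ ∑ j ∈ J, v j = 0 := by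
  intro v hv hv0
  set M' := M.map (Int.cast : ℤ → ℚ)
  set F := fromBlocks (A.map (Int.cast : ℤ → ℚ)) (B.map (Int.cast : ℤ → ℚ)) 0
    (C.map (Int.cast : ℤ → ℚ))
  obtain ⟨c, rfl⟩ : ∃ c, c ᵥ* M' = v := (range_vecMulLinear M').ge hv
  let eR : Fin h ≃ Fin n ⊕ Fin m := (finCongr hnm).trans finSumFinEquiv.symm
  let eC : Fin k ≃ Fin s ⊕ Fin t := (finCongr hst).trans finSumFinEquiv.symm
  have hblock : (c ᵥ* M') ∘ σ ∘ eC.symm = ((c ᵥ* R⁻¹) ∘ eR.symm) ᵥ* F := by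
    have h := vecMul_eq_vecMul_inv_vecMul hR heq c
    rw [reindex_apply, submatrix_submatrix] at h
    change c ᵥ* M'.submatrix (Equiv.refl _) σ = (c ᵥ* R⁻¹) ᵥ* F.submatrix eR eC at h
    rw [submatrix_vecMul_equiv, submatrix_vecMul_equiv, Equiv.refl_symm, Equiv.coe_refl,
      Function.comp_id] at h
    rw [← Function.comp_assoc, h, Function.comp_assoc, eC.self_comp_symm, Function.comp_id]
  have hA := linearIndependent_row_of_rank_eq_card (hArank.trans (Fintype.card_fin n).symm)
  have hAsum : ∀ i, ∑ j, A.map (Int.cast : ℤ → ℚ) i j = 0 := fun i => by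
    simpa using congrArg (Int.cast : ℤ → ℚ) (hAcols i)
  refine HasZeroSubsum.of_comp (σ.injective.comp eC.symm.injective) ?_
  rw [hblock]
  refine hasZeroSubsum_vecMul_fromBlocks _ hA hAsum (C := C.map (Int.cast : ℤ → ℚ)) hC _ ?_
  rw [← hblock]
  exact (eC.symm.trans σ).surjective.injective_comp_right.ne hv0

/-- **Row-space property from block structure (Proposition: (iv) ⇒ (iii)).**
If `M ∈ ℤ^{h×k}` of rank `h` is equivalent (column permutations and elementary row
operations) to `[[A, B], [0, C]]` where `A` has rank `n` and columns summing to
zero, and every nonzero vector of the row space of `C` has a nonempty set of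
nonzero coordinates summing to zero, then every nonzero vector `v` of the row space
of `M` admits a nonempty set `J` with `v_j ≠ 0` for `j ∈ J` and `∑_{j∈J} v_j = 0`. -/
theorem stmt8 (h k n s m t : ℕ) (hn : 0 < n) (hs : 0 < s)
    (hnm : h = n + m) (hst : k = s + t)
    (M : Matrix (Fin h) (Fin k) ℤ)
    (hrank : (M.map (Int.cast : ℤ → ℚ)).rank = h)
    (A : Matrix (Fin n) (Fin s) ℤ) (B : Matrix (Fin n) (Fin t) ℤ)
    (C : Matrix (Fin m) (Fin t) ℤ)
    (R : Matrix (Fin h) (Fin h) ℚ) (σ : Equiv.Perm (Fin k))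
    (hR : IsUnit R)
    (heq : R * (M.map (Int.cast : ℤ → ℚ)).submatrix id σ =
      (Matrix.reindex finSumFinEquiv finSumFinEquiv
        (Matrix.fromBlocks (A.map (Int.cast : ℤ → ℚ)) (B.map (Int.cast : ℤ → ℚ))
          0 (C.map (Int.cast : ℤ → ℚ)))).submatrix (Fin.cast hnm) (Fin.cast hst))
    (hArank : (A.map (Int.cast : ℤ → ℚ)).rank = n)
    (hAcols : ∀ i : Fin n, ∑ j : Fin s, A i j = 0)
    (hC : ∀ w : Fin t → ℚ,
      w ∈ Submodule.span ℚ (Set.range fun i : Fin m => fun j : Fin t => (C i j : ℚ)) →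
      w ≠ 0 →
      ∃ J : Finset (Fin t), J.Nonempty ∧ (∀ j ∈ J, w j ≠ 0) ∧ ∑ j ∈ J, w j = 0) :
    ∀ v : Fin k → ℚ,
      v ∈ Submodule.span ℚ (Set.range fun i : Fin h => fun j : Fin k => (M i j : ℚ)) →
      v ≠ 0 →
      ∃ J : Finset (Fin k), J.Nonempty ∧ (∀ j ∈ J, v j ≠ 0) ∧ ∑ j ∈ J, v j = 0 :=
  stmt8_general h k n s m t hnm hst M A B C R σ hR heq hArank hAcols hC
end

section
/- Let s, N ∈ ℕ, B ⊆ ℤ finite, q ∈ ℕ₀, and Q_1, ..., Q_s : B^q → ℤ arbitrary functions. Define for finitely supported h : ℤ → ℂ the operator Ψ(h) = ∑_{x∈ℤ} ∑_{d∈B^q} ∏_{j=1}^s h(x + Q_j(d)). If f, g : ℤ → [0,1] are supported on {1,...,N}, then |Ψ(f) − Ψ(g)| ≤ s · |B|^q · N^{1/2} · ‖f − g‖_{L²(ℤ)}. -/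
open Finset

/-!
Telescoping a product of factors bounded by `1` gives
`|∏ a - ∏ b| ≤ ∑ |a i - b i|`, so `|Ψ(f) - Ψ(g)|` is at most a sum of `s |B|^q` translates of
`‖f - g‖_{L¹}`. Translation does not change the `L¹` norm, and `f - g` lives on `{1, …, N}`,
where Cauchy–Schwarz gives `‖f - g‖_{L¹} ≤ N^{1/2} ‖f - g‖_{L²}`.
-/

lemma abs_prod_sub_prod_le_sum_abs_sub {ι : Type*} (t : Finset ι) {a b : ι → ℝ}
    (ha : ∀ i ∈ t, |a i| ≤ 1) (hb : ∀ i ∈ t, |b i| ≤ 1) :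
    |∏ i ∈ t, a i - ∏ i ∈ t, b i| ≤ ∑ i ∈ t, |a i - b i| := by
  induction t using Finset.cons_induction with
  | empty => simp
  | cons i t hi ih =>
    simp only [forall_mem_cons] at ha hb
    have hprod : |∏ j ∈ t, b j| ≤ 1 := by
      rw [abs_prod]
      exact prod_le_one (fun _ _ => abs_nonneg _) hb.2
    rw [prod_cons, prod_cons, sum_cons]
    calc |a i * ∏ j ∈ t, a j - b i * ∏ j ∈ t, b j|
        = |a i * (∏ j ∈ t, a j - ∏ j ∈ t, b j) + (a i - b i) * ∏ j ∈ t, b j| := by ring_nf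
      _ ≤ |a i| * |∏ j ∈ t, a j - ∏ j ∈ t, b j| + |a i - b i| * |∏ j ∈ t, b j| := by
          rw [← abs_mul, ← abs_mul]
          exact abs_add_le _ _
      _ ≤ 1 * ∑ j ∈ t, |a j - b j| + |a i - b i| * 1 := by
          gcongr
          exacts [ha.1, ih ha.2 hb.2]
      _ = |a i - b i| + ∑ j ∈ t, |a j - b j| := by ring

lemma sum_comp_add_le_of_eq_zero {G : Type*} [AddGroup G] {φ : G → ℝ} (hφ : ∀ y, 0 ≤ φ y)
    {T : Finset G} (hT : ∀ y ∉ T, φ y = 0) (S : Finset G) (c : G) :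
    ∑ x ∈ S, φ (x + c) ≤ ∑ y ∈ T, φ y := by
  classical
  calc ∑ x ∈ S, φ (x + c) = ∑ y ∈ S.map (addRightEmbedding c), φ y :=
        (sum_map S (addRightEmbedding c) φ).symm
    _ ≤ ∑ y ∈ S.map (addRightEmbedding c) ∪ T, φ y :=
        sum_le_sum_of_subset_of_nonneg subset_union_left fun y _ _ => hφ y
    _ = ∑ y ∈ T, φ y := (sum_subset subset_union_right fun y _ hy => hT y hy).symm

lemma sum_abs_le_sqrt_card_mul_sqrt_sum_sq {ι : Type*} (T : Finset ι) (h : ι → ℝ) :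
    ∑ i ∈ T, |h i| ≤ √(#T : ℝ) * √(∑ i ∈ T, h i ^ 2) := by
  simpa using Real.sum_mul_le_sqrt_mul_sqrt T (fun _ => 1) (fun i => |h i|)

section PatternSum

variable {ι δ : Type*} [Fintype ι] (D : Finset δ) (Q : ι → δ → ℤ)

/-- `Ψ(u) = ∑ᶠ x, patternSum D Q u x`, with `D = B^q`. -/
def patternSum (u : ℤ → ℝ) (x : ℤ) : ℝ :=
  ∑ d ∈ D, ∏ j, u (x + Q j d)

lemma support_patternSum_subset (j₀ : ι) {u : ℤ → ℝ} {T : Finset ℤ} (hu : ∀ y ∉ T, u y = 0) :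
    Function.support (patternSum D Q u) ⊆ D.biUnion fun d => T.image (· - Q j₀ d) := by
  intro x hx
  by_contra hxS
  refine hx (sum_eq_zero fun d hd => prod_eq_zero (mem_univ j₀) (hu _ fun hy => hxS ?_))
  exact mem_biUnion.2 ⟨d, hd, mem_image.2 ⟨_, hy, add_sub_cancel_right _ _⟩⟩

lemma abs_patternSum_sub_le {f g : ℤ → ℝ} (hf : ∀ y, |f y| ≤ 1) (hg : ∀ y, |g y| ≤ 1) (x : ℤ) :
    |patternSum D Q f x - patternSum D Q g x| ≤
      ∑ d ∈ D, ∑ j, |f (x + Q j d) - g (x + Q j d)| := by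
  rw [patternSum, patternSum, ← sum_sub_distrib]
  exact (abs_sum_le_sum_abs _ _).trans <| sum_le_sum fun d _ =>
    abs_prod_sub_prod_le_sum_abs_sub _ (fun j _ => hf _) (fun j _ => hg _)

lemma abs_sum_patternSum_sub_le {f g : ℤ → ℝ} (hf : ∀ y, |f y| ≤ 1) (hg : ∀ y, |g y| ≤ 1)
    {T : Finset ℤ} (hT : ∀ y ∉ T, f y - g y = 0) (S : Finset ℤ) :
    |∑ x ∈ S, patternSum D Q f x - ∑ x ∈ S, patternSum D Q g x| ≤
      Fintype.card ι * #D * ∑ y ∈ T, |f y - g y| := by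
  calc |∑ x ∈ S, patternSum D Q f x - ∑ x ∈ S, patternSum D Q g x|
      ≤ ∑ x ∈ S, |patternSum D Q f x - patternSum D Q g x| := by
        rw [← sum_sub_distrib]
        exact abs_sum_le_sum_abs _ _
    _ ≤ ∑ x ∈ S, ∑ d ∈ D, ∑ j, |f (x + Q j d) - g (x + Q j d)| :=
        sum_le_sum fun x _ => abs_patternSum_sub_le D Q hf hg x
    _ = ∑ d ∈ D, ∑ j, ∑ x ∈ S, |f (x + Q j d) - g (x + Q j d)| := by
        rw [sum_comm]
        exact sum_congr rfl fun d _ => sum_comm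
    _ ≤ ∑ d ∈ D, ∑ j : ι, ∑ y ∈ T, |f y - g y| :=
        sum_le_sum fun d _ => sum_le_sum fun j _ =>
          sum_comp_add_le_of_eq_zero (fun y => abs_nonneg (f y - g y))
            (fun y hy => by rw [hT y hy, abs_zero]) S _
    _ = Fintype.card ι * #D * ∑ y ∈ T, |f y - g y| := by
        simp only [sum_const, card_univ, nsmul_eq_mul]
        ring

end PatternSum

theorem stmt10_general (s N : ℕ) (hs : 0 < s) (B : Finset ℤ) (q : ℕ)
    (Q : Fin s → ((Fin q → ℤ) → ℤ)) (f g : ℤ → ℝ)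
    (hfsupp : ∀ x : ℤ, x ∉ Finset.Icc (1 : ℤ) (N : ℤ) → f x = 0)
    (hgsupp : ∀ x : ℤ, x ∉ Finset.Icc (1 : ℤ) (N : ℤ) → g x = 0)
    (hf : ∀ x : ℤ, f x ∈ Set.Icc (0 : ℝ) 1)
    (hg : ∀ x : ℤ, g x ∈ Set.Icc (0 : ℝ) 1) :
    |(∑ᶠ x : ℤ, ∑ d ∈ Fintype.piFinset (fun _ : Fin q => B),
        ∏ j : Fin s, f (x + Q j d)) -
      (∑ᶠ x : ℤ, ∑ d ∈ Fintype.piFinset (fun _ : Fin q => B),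
        ∏ j : Fin s, g (x + Q j d))| ≤
      (s : ℝ) * (B.card : ℝ) ^ q * Real.sqrt N *
        Real.sqrt (∑ᶠ x : ℤ, (f x - g x) ^ 2) := by
  set D := Fintype.piFinset fun _ : Fin q => B
  have hbdd {u : ℤ → ℝ} (hu : ∀ x, u x ∈ Set.Icc (0 : ℝ) 1) (x : ℤ) : |u x| ≤ 1 :=
    abs_le.2 ⟨by linarith [(hu x).1], (hu x).2⟩
  have hsub (x : ℤ) (hx : x ∉ Icc (1 : ℤ) N) : f x - g x = 0 := by
    rw [hfsupp x hx, hgsupp x hx, sub_zero]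
  have hL2 : ∑ᶠ x, (f x - g x) ^ 2 = ∑ x ∈ Icc (1 : ℤ) N, (f x - g x) ^ 2 :=
    finsum_eq_finsetSum_of_support_subset _ fun x hx => by
      by_contra hxI
      exact hx (by simp [hsub x hxI])
  show |∑ᶠ x, patternSum D Q f x - ∑ᶠ x, patternSum D Q g x| ≤ _
  rw [finsum_eq_finsetSum_of_support_subset _ (support_patternSum_subset D Q ⟨0, hs⟩ hfsupp),
    finsum_eq_finsetSum_of_support_subset _ (support_patternSum_subset D Q ⟨0, hs⟩ hgsupp), hL2]
  calc _ ≤ s * #B ^ q * ∑ x ∈ Icc (1 : ℤ) N, |f x - g x| := by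
        simpa [D] using abs_sum_patternSum_sub_le D Q (hbdd hf) (hbdd hg) hsub _
    _ ≤ _ := by
        rw [mul_assoc _ √(N : ℝ)]
        gcongr
        simpa using sum_abs_le_sqrt_card_mul_sqrt_sum_sq (Icc (1 : ℤ) N) (fun x => f x - g x)

/-- **Generalised von Neumann theorem for the auxiliary operator Ψ.**
For `f, g : ℤ → [0,1]` supported on `{1,…,N}` and arbitrary `Q_j : B^q → ℤ`,
with `Ψ(h) = ∑_{x∈ℤ} ∑_{d∈B^q} ∏_{j=1}^s h(x + Q_j(d))`, one has
`|Ψ(f) − Ψ(g)| ≤ s |B|^q N^{1/2} ‖f − g‖_{L²(ℤ)}`. -/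
theorem stmt10 (s N : ℕ) (hs : 0 < s) (hN : 0 < N) (B : Finset ℤ) (q : ℕ)
    (Q : Fin s → ((Fin q → ℤ) → ℤ)) (f g : ℤ → ℝ)
    (hfsupp : ∀ x : ℤ, x ∉ Finset.Icc (1 : ℤ) (N : ℤ) → f x = 0)
    (hgsupp : ∀ x : ℤ, x ∉ Finset.Icc (1 : ℤ) (N : ℤ) → g x = 0)
    (hf : ∀ x : ℤ, f x ∈ Set.Icc (0 : ℝ) 1)
    (hg : ∀ x : ℤ, g x ∈ Set.Icc (0 : ℝ) 1) :
    |(∑ᶠ x : ℤ, ∑ d ∈ Fintype.piFinset (fun _ : Fin q => B),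
        ∏ j : Fin s, f (x + Q j d)) -
      (∑ᶠ x : ℤ, ∑ d ∈ Fintype.piFinset (fun _ : Fin q => B),
        ∏ j : Fin s, g (x + Q j d))| ≤
      (s : ℝ) * (B.card : ℝ) ^ q * Real.sqrt N *
        Real.sqrt (∑ᶠ x : ℤ, (f x - g x) ^ 2) :=
  stmt10_general s N hs B q Q f g hfsupp hgsupp hf hg
end

section
/- Consider the 2×4 integer matrix M with rows (1, −2, 1, 0) and (1, −1, 0, 1). M obeys the columns condition, yet the system of quadratic equations x² + z² = 2y², x² + d² = y² has no solutions in positive integers (x, y, z, d). Consequently, this system is not partition regular over ℕ. -/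
/-!
If `x² + z² = 2y²` and `x² + d² = y²`, then `x² = y² - d²` and `z² = y² + d²`, so
`(xz)² = y⁴ - d⁴`. Positive solutions of `a⁴ - b⁴ = c²` are excluded by Fermat's descent, after
reducing to coprime `a, b`. If `b` is odd, the primitive triple `(b², c, a²)` gives
`b² = m² - n²`, `a² = m² + n²`, hence the smaller solution `m⁴ - n⁴ = (ab)²`. If `b` is even, the
primitive triple `(c, b², a²)` gives `b² = 2mn`, `a² = m² + n²`; parametrizing the primitive
triple `(m, n, a)` turns this into `(b/2)² = pq(p² - q²)` with pairwise coprime factors, so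
`p = r²`, `q = s²`, `p² - q² = v²` and `r⁴ - s⁴ = v²` with `r < a`.

The columns condition holds with the blocks `{c₁, c₂, c₃}` and `{c₄}`, since `c₄ = c₁ - c₃`.
-/

open Finset

theorem PythagoreanTriple.exists_pos_params {x y z : ℤ} (h : PythagoreanTriple x y z)
    (hxy : IsCoprime x y) (hx : Odd x) (hy : 0 < y) (hz : 0 < z) :
    ∃ m n, 0 < m ∧ 0 < n ∧ IsCoprime m n ∧
      x = m ^ 2 - n ^ 2 ∧ y = 2 * m * n ∧ z = m ^ 2 + n ^ 2 := by
  obtain ⟨m, n, hx', hy', hz', hmn, -, hm⟩ := h.coprime_classification'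
    (Int.isCoprime_iff_gcd_eq_one.mp hxy) (Int.odd_iff.mp hx) hz
  have hmn_pos : 0 < m * n := by linarith
  have hm : 0 < m := lt_of_le_of_ne hm (by rintro rfl; simp at hmn_pos)
  exact ⟨m, n, hm, pos_of_mul_pos_right hmn_pos hm.le,
    Int.isCoprime_iff_gcd_eq_one.mpr hmn, hx', hy', hz'⟩

theorem IsCoprime.odd_or_odd {m n : ℤ} (h : IsCoprime m n) : Odd m ∨ Odd n := by
  by_contra! hmn
  simp only [Int.not_odd_iff_even] at hmn
  have := h.isUnit_of_dvd' hmn.1.two_dvd hmn.2.two_dvd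
  norm_num [Int.isUnit_iff] at this

theorem exists_params_of_sq_add_sq_eq_sq {m n a : ℤ} (hm : 0 < m) (hn : 0 < n) (ha : 0 < a)
    (hmn : IsCoprime m n) (h : m ^ 2 + n ^ 2 = a ^ 2) :
    ∃ p q, 0 < q ∧ q < p ∧ IsCoprime p q ∧ a = p ^ 2 + q ^ 2 ∧
      m * n = 2 * p * q * (p ^ 2 - q ^ 2) := by
  wlog hm_odd : Odd m generalizing m n
  · obtain ⟨p, q, hpq⟩ := this hn hm hmn.symm (by rw [← h, add_comm])
      (hmn.odd_or_odd.resolve_left hm_odd)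
    exact ⟨p, q, by rwa [mul_comm]⟩
  obtain ⟨p, q, hp, hq, hpq, rfl, rfl, rfl⟩ := PythagoreanTriple.exists_pos_params
    (by unfold PythagoreanTriple; linear_combination h) hmn hm_odd hn ha
  exact ⟨p, q, hq, by nlinarith, hpq, rfl, by ring⟩

theorem Int.exists_pos_sq_of_isCoprime {a b c : ℤ} (hab : IsCoprime a b) (ha : 0 < a)
    (h : a * b = c ^ 2) : ∃ r, 0 < r ∧ a = r ^ 2 := by
  obtain ⟨r, hr | hr⟩ := Int.sq_of_isCoprime hab h
  · refine ⟨|r|, abs_pos.mpr ?_, by rw [sq_abs, hr]⟩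
    rintro rfl
    simp_all
  · nlinarith [sq_nonneg r]

def FermatRightTriangle (a b c : ℤ) : Prop :=
  0 < a ∧ 0 < b ∧ 0 < c ∧ a ^ 4 - b ^ 4 = c ^ 2

namespace FermatRightTriangle

variable {a b c : ℤ}

theorem exists_isCoprime_le (h : FermatRightTriangle a b c) :
    ∃ a' b' c', FermatRightTriangle a' b' c' ∧ IsCoprime a' b' ∧ a' ≤ a := by
  obtain ⟨ha, hb, hc, habc⟩ := h
  obtain ⟨g, a', b', hg, hab', rfl, rfl⟩ :=
    Int.exists_gcd_one' (Int.gcd_pos_of_ne_zero_left b ha.ne')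
  have hg : (0 : ℤ) < g := by exact_mod_cast hg
  have hgc : (g ^ 2 : ℤ) ^ 2 ∣ c ^ 2 := ⟨a' ^ 4 - b' ^ 4, by rw [← habc]; ring⟩
  obtain ⟨c', rfl⟩ := (Int.pow_dvd_pow_iff two_ne_zero).mp hgc
  have ha' : 0 < a' := pos_of_mul_pos_left ha hg.le
  have habc' : (g : ℤ) ^ 4 * (a' ^ 4 - b' ^ 4) = (g : ℤ) ^ 4 * c' ^ 2 := by
    linear_combination habc
  refine ⟨a', b', c', ⟨ha', pos_of_mul_pos_left hb hg.le, pos_of_mul_pos_right hc (by positivity),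
    mul_left_cancel₀ (by positivity) habc'⟩, Int.isCoprime_iff_gcd_eq_one.mpr hab',
    le_mul_of_one_le_right ha'.le hg⟩

theorem isCoprime_sq_left (h : FermatRightTriangle a b c) (hab : IsCoprime a b) :
    IsCoprime (b ^ 2) c := by
  have hb4 : IsCoprime (b ^ 4) (a ^ 4 - b ^ 4 * 1) :=
    IsCoprime.sub_mul_left_right_iff.mpr hab.symm.pow
  rwa [mul_one, h.2.2.2, IsCoprime.pow_right_iff two_pos, show b ^ 4 = (b ^ 2) ^ 2 by ring,
    IsCoprime.pow_left_iff two_pos] at hb4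

theorem exists_lt_of_odd (h : FermatRightTriangle a b c) (hab : IsCoprime a b) (hb : Odd b) :
    ∃ a' b' c', FermatRightTriangle a' b' c' ∧ a' < a := by
  have ⟨ha, _, hc, habc⟩ := h
  obtain ⟨m, n, hm, hn, -, hbmn, -, hamn⟩ := PythagoreanTriple.exists_pos_params
    (x := b ^ 2) (y := c) (z := a ^ 2) (by unfold PythagoreanTriple; linear_combination -habc)
    (h.isCoprime_sq_left hab) hb.pow hc (by positivity)
  refine ⟨m, n, a * b, ⟨hm, hn, by positivity, ?_⟩, by nlinarith [pow_pos hn 2]⟩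
  linear_combination (-b ^ 2) * hamn - (m ^ 2 + n ^ 2) * hbmn

theorem exists_lt_of_even (h : FermatRightTriangle a b c) (hab : IsCoprime a b) (hb : Even b) :
    ∃ a' b' c', FermatRightTriangle a' b' c' ∧ a' < a := by
  have ⟨ha, _, _, habc⟩ := h
  have hbc := h.isCoprime_sq_left hab
  have hc_odd : Odd c := hbc.odd_or_odd.resolve_left
    (Int.not_odd_iff_even.mpr (hb.pow_of_ne_zero two_ne_zero))
  obtain ⟨m, n, hm, hn, hmn, -, hbmn, hamn⟩ := PythagoreanTriple.exists_pos_params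
    (x := c) (y := b ^ 2) (z := a ^ 2) (by unfold PythagoreanTriple; linear_combination -habc)
    hbc.symm hc_odd (by positivity) (by positivity)
  obtain ⟨p, q, hq, hqp, hpq, rfl, hmnpq⟩ :=
    exists_params_of_sq_add_sq_eq_sq hm hn ha hmn hamn.symm
  obtain ⟨w, rfl⟩ := hb.two_dvd
  have hw : p * (q * (p ^ 2 - q ^ 2)) = w ^ 2 := by linarith
  have hp_diff : IsCoprime p (p ^ 2 - q ^ 2) := by
    rw [sq p, IsCoprime.mul_sub_left_right_iff]; exact hpq.pow_right
  have hq_diff : IsCoprime q (p ^ 2 - q ^ 2) := by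
    rw [sq q, IsCoprime.sub_mul_left_right_iff]; exact hpq.symm.pow_right
  obtain ⟨v, hv, hpqv⟩ := Int.exists_pos_sq_of_isCoprime (hp_diff.mul_left hq_diff).symm
    (by nlinarith) (by rw [← hw]; ring)
  obtain ⟨r, hr, rfl⟩ := Int.exists_pos_sq_of_isCoprime (hpq.mul_right hp_diff) (hq.trans hqp) hw
  obtain ⟨s, hs, rfl⟩ := Int.exists_pos_sq_of_isCoprime (hpq.symm.mul_right hq_diff) hq
    (by rw [← hw]; ring)
  exact ⟨r, s, v, ⟨hr, hs, hv, by linear_combination hpqv⟩, by nlinarith⟩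

theorem exists_lt (h : FermatRightTriangle a b c) :
    ∃ a' b' c', FermatRightTriangle a' b' c' ∧ a' < a := by
  obtain ⟨a₀, b₀, c₀, h₀, hab₀, ha₀⟩ := h.exists_isCoprime_le
  obtain ⟨a', b', c', h', ha'⟩ :=
    (Int.even_or_odd b₀).elim (h₀.exists_lt_of_even hab₀) (h₀.exists_lt_of_odd hab₀)
  exact ⟨a', b', c', h', ha'.trans_le ha₀⟩

end FermatRightTriangle

theorem not_fermatRightTriangle (a b c : ℤ) : ¬ FermatRightTriangle a b c := by
  induction hn : a.toNat using Nat.strong_induction_on generalizing a b c with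
  | _ n ih =>
    intro h
    obtain ⟨a', b', c', h', ha'⟩ := h.exists_lt
    exact ih a'.toNat (by have := h'.1; omega) a' b' c' rfl h'

theorem not_exists_pos_solution : ¬ ∃ x y z d : ℕ, 0 < x ∧ 0 < y ∧ 0 < z ∧ 0 < d ∧
    x ^ 2 + z ^ 2 = 2 * y ^ 2 ∧ x ^ 2 + d ^ 2 = y ^ 2 := by
  rintro ⟨x, y, z, d, hx, hy, hz, hd, h₁, h₂⟩
  zify at hx hy hz hd h₁ h₂
  refine not_fermatRightTriangle y d (x * z) ⟨hy, hd, by positivity, ?_⟩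
  linear_combination (-(x : ℤ) ^ 2) * h₁ - ((y : ℤ) ^ 2 + d ^ 2 - x ^ 2) * h₂

theorem columnsCondition_example :
    ColumnsCondition (Matrix.of ![![1, -2, 1, 0], ![1, -1, 0, 1]] : Matrix (Fin 2) (Fin 4) ℤ) := by
  refine ⟨2, ![{0, 1, 2}, {3}], by decide, by decide, by decide, ?_, ?_⟩
  · intro i hi
    obtain rfl : i = 0 := Fin.ext hi
    ext r; fin_cases r <;> simp [Finset.sum_apply]; norm_num
  · intro i hi
    obtain rfl : i = 1 := by omega
    refine (congrArg (· ∈ _) ?_).mpr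
      (sub_mem (Submodule.subset_span ⟨0, ⟨0, Nat.one_pos, by decide⟩, rfl⟩)
        (Submodule.subset_span ⟨2, ⟨0, Nat.one_pos, by decide⟩, rfl⟩))
    ext r; fin_cases r <;> simp [Finset.sum_apply]

/-- **The columns condition does not suffice for nonlinear systems.** The matrix
with rows `(1, −2, 1, 0)` and `(1, −1, 0, 1)` obeys the columns condition, yet the
corresponding quadric system `x² + z² = 2y²`, `x² + d² = y²` has no solutions in
positive integers, and hence is not partition regular over ℕ. -/
theorem stmt11 :
    ColumnsCondition (Matrix.of ![![1, -2, 1, 0], ![1, -1, 0, 1]] :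
      Matrix (Fin 2) (Fin 4) ℤ) ∧
    (¬ ∃ x y z d : ℕ, 0 < x ∧ 0 < y ∧ 0 < z ∧ 0 < d ∧
      x ^ 2 + z ^ 2 = 2 * y ^ 2 ∧ x ^ 2 + d ^ 2 = y ^ 2) ∧
    ¬ (∀ (r : ℕ) (c : ℕ → Fin (r + 1)), ∃ x y z d : ℕ,
      0 < x ∧ 0 < y ∧ 0 < z ∧ 0 < d ∧
      x ^ 2 + z ^ 2 = 2 * y ^ 2 ∧ x ^ 2 + d ^ 2 = y ^ 2 ∧
      c x = c y ∧ c y = c z ∧ c z = c d) := by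
  refine ⟨columnsCondition_example, not_exists_pos_solution, fun h => ?_⟩
  obtain ⟨x, y, z, d, hx, hy, hz, hd, h₁, h₂, -⟩ := h 0 fun _ => 0
  exact not_exists_pos_solution ⟨x, y, z, d, hx, hy, hz, hd, h₁, h₂⟩
end

section
/- Let S ⊆ ℕ be multiplicatively syndetic (i.e., multiplicatively [M]-syndetic for some M ∈ ℕ). Then S has positive lower density: liminf_{N→∞} |S ∩ {1,...,N}|/N ≥ 1/M² > 0. -/
/-!
Each `x ≤ N / M` has a multiple `m * x ∈ S ∩ [1, N]` with `1 ≤ m ≤ M`, and `x` is recovered as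
`(m * x) / m`. So `[1, N / M]` is covered by the quotients `a / m` with `a ∈ S ∩ [1, N]` and
`m ≤ M`, whence `N / M ≤ M · |S ∩ [1, N]|`, i.e. `|S ∩ [1, N]| / N ≥ 1 / M² - O(1 / N)`.
-/

open Filter

open Set Topology

theorem natCard_inter_Icc_div_le_one (S : Set ℕ) (N : ℕ) :
    (Nat.card (S ∩ Icc 1 N : Set ℕ) : ℝ) / N ≤ 1 := by
  rcases N.eq_zero_or_pos with rfl | hN
  · simp
  have hcard : Nat.card (S ∩ Icc 1 N : Set ℕ) ≤ N := by
    simpa using Nat.card_mono (finite_Icc 1 N) (inter_subset_right (s := S))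
  rw [div_le_one (by exact_mod_cast hN)]
  exact_mod_cast hcard

namespace MultSyndetic

variable {M : ℕ} {S : Set ℕ}

theorem pos_s12 (hS : MultSyndetic M S) : 0 < M := by
  obtain ⟨m, hm1, hmM, -⟩ := hS 1 one_pos
  omega

theorem div_le_mul_card (hS : MultSyndetic M S) (N : ℕ) :
    N / M ≤ M * Nat.card (S ∩ Icc 1 N : Set ℕ) := by
  have hcover : Icc 1 (N / M) ⊆ (fun p : ℕ × ℕ => p.2 / p.1) '' (Icc 1 M ×ˢ (S ∩ Icc 1 N)) := by
    rintro x ⟨hx1, hxN⟩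
    obtain ⟨m, hm1, hmM, hmS⟩ := hS x hx1
    have hmx : m * x ≤ N :=
      calc m * x ≤ M * (N / M) := Nat.mul_le_mul hmM hxN
        _ ≤ N := Nat.mul_div_le N M
    exact ⟨(m, m * x), ⟨⟨hm1, hmM⟩, hmS, Nat.mul_pos hm1 hx1, hmx⟩, Nat.mul_div_cancel_left x hm1⟩
  have hfin : (Icc 1 M ×ˢ (S ∩ Icc 1 N)).Finite :=
    (finite_Icc 1 M).prod ((finite_Icc 1 N).subset inter_subset_right)
  calc N / M = (Icc 1 (N / M)).ncard := by simp
    _ ≤ (Icc 1 M ×ˢ (S ∩ Icc 1 N)).ncard :=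
      (ncard_le_ncard hcover (hfin.image _)).trans (ncard_image_le hfin)
    _ = M * Nat.card (S ∩ Icc 1 N : Set ℕ) := by simp [ncard_prod, Nat.card_coe_set_eq]

theorem inv_sq_sub_le_card_inter_Icc_div (hS : MultSyndetic M S) {N : ℕ} (hN : 0 < N) :
    1 / (M : ℝ) ^ 2 - 1 / (M * N) ≤ (Nat.card (S ∩ Icc 1 N : Set ℕ) : ℝ) / N := by
  have hM : (0 : ℝ) < M := by exact_mod_cast hS.pos_s12
  have hN : (0 : ℝ) < N := by exact_mod_cast hN
  have hfloor : (N : ℝ) / M - 1 < ((N / M : ℕ) : ℝ) := by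
    rw [← Nat.floor_div_eq_div (K := ℝ)]
    exact Nat.sub_one_lt_floor _
  have hcount : ((N / M : ℕ) : ℝ) ≤ M * Nat.card (S ∩ Icc 1 N : Set ℕ) := by
    exact_mod_cast hS.div_le_mul_card N
  have hc : ((N : ℝ) / M - 1) / M ≤ Nat.card (S ∩ Icc 1 N : Set ℕ) :=
    (div_le_iff₀' hM).2 (hfloor.le.trans hcount)
  calc 1 / (M : ℝ) ^ 2 - 1 / (M * N) = ((N : ℝ) / M - 1) / M / N := by field_simp
    _ ≤ _ := div_le_div_of_nonneg_right hc hN.le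

end MultSyndetic

theorem stmt12_general (M : ℕ) (S : Set ℕ) (hS : MultSyndetic M S) :
    (0 : ℝ) < 1 / (M : ℝ) ^ 2 ∧
    1 / (M : ℝ) ^ 2 ≤
      Filter.liminf
        (fun N : ℕ => (Nat.card (S ∩ Set.Icc 1 N : Set ℕ) : ℝ) / N)
        Filter.atTop := by
  have hM : (0 : ℝ) < M := by exact_mod_cast hS.pos_s12
  refine ⟨by positivity, ?_⟩
  have hlim : Tendsto (fun N : ℕ => 1 / (M : ℝ) ^ 2 - 1 / (M * N)) atTop
      (𝓝 (1 / (M : ℝ) ^ 2)) := by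
    simpa only [sub_zero] using (tendsto_const_nhds (x := 1 / (M : ℝ) ^ 2)).sub
      ((tendsto_const_nhds (x := (1 : ℝ))).div_atTop
        (tendsto_natCast_atTop_atTop.const_mul_atTop hM))
  have hbdd : IsBoundedUnder (· ≤ ·) atTop
      (fun N : ℕ => (Nat.card (S ∩ Set.Icc 1 N : Set ℕ) : ℝ) / N) :=
    isBoundedUnder_of ⟨1, natCard_inter_Icc_div_le_one S⟩
  rw [← hlim.liminf_eq]
  exact liminf_le_liminf
    ((eventually_gt_atTop 0).mono fun N hN => hS.inv_sq_sub_le_card_inter_Icc_div hN)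
    hlim.isBoundedUnder_ge hbdd.isCoboundedUnder_flip

/-- **Multiplicatively syndetic sets have positive lower density.** If `S` is
multiplicatively `[M]`-syndetic, then
`liminf_{N→∞} |S ∩ [N]|/N ≥ 1/M² > 0`. -/
theorem stmt12 (M : ℕ) (hM : 0 < M) (S : Set ℕ) (hS : MultSyndetic M S) :
    (0 : ℝ) < 1 / (M : ℝ) ^ 2 ∧
    1 / (M : ℝ) ^ 2 ≤
      Filter.liminf
        (fun N : ℕ => (Nat.card (S ∩ Set.Icc 1 N : Set ℕ) : ℝ) / N)
        Filter.atTop :=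
  stmt12_general M S hS
end
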